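/- arXiv:0912.3415 — 2 statements merged into one kernel-verified Lean document; each statement's English description precedes it below -/
import Mathlib

section
/- For the n-Kronecker quiver with n ≥ 3, for every i ≥ 1 and every indecomposable X with dimension vector (1,1), the GR measure μ(τ^i X) starts with {1,2,3}, i.e., {1,2,3} ≪ μ(τ^i X) or equality up to the initial segment; in particular μ(τ^i X) > {1,2,3}. -/
/-! Representations of the `n`-Kronecker quiver (two vertices, `n` arrows from
vertex 2 to vertex 1) over a field `k`, with the Gabriel-Roiter measure. -/

/-- Gabriel-Roiter order on subsets of ℕ. -/
def grLT (I J : Set ℕ) : Prop := I ≠ J ∧ sInf (symmDiff I J) ∈ J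

def grLE (I J : Set ℕ) : Prop := I = J ∨ grLT I J

/-- `J` starts with `I`: `I = J`, or `I ⊊ J` and every element of `I` is smaller
than every element of `J \ I`. -/
def startsWith (I J : Set ℕ) : Prop :=
  I = J ∨ (I ⊂ J ∧ ∀ a ∈ I, ∀ b ∈ J \ I, a < b)

/-- A representation of the `n`-Kronecker quiver: vector spaces `V1`, `V2` and `n`
linear maps `V2 → V1`. -/
structure KRep (k : Type) [Field k] (n : ℕ) : Type 1 where
  V1 : Type
  V2 : Type
  [ac1 : AddCommGroup V1]
  [ac2 : AddCommGroup V2]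
  [md1 : Module k V1]
  [md2 : Module k V2]
  f : Fin n → V2 →ₗ[k] V1

attribute [instance] KRep.ac1 KRep.ac2 KRep.md1 KRep.md2

variable {k : Type} [Field k] {n : ℕ}

/-- Morphisms of Kronecker representations. -/
@[ext] structure KHom (A B : KRep k n) where
  g1 : A.V1 →ₗ[k] B.V1
  g2 : A.V2 →ₗ[k] B.V2
  comm : ∀ i, (B.f i).comp g2 = g1.comp (A.f i)

def KHom.idHom (A : KRep k n) : KHom A A :=
  ⟨LinearMap.id, LinearMap.id, fun _ => rfl⟩

def KHom.comp {A B C : KRep k n} (g : KHom B C) (f : KHom A B) : KHom A C :=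
  ⟨g.g1.comp f.g1, g.g2.comp f.g2, fun i => by
    ext x
    have h1 := LinearMap.congr_fun (g.comm i) (f.g2 x)
    have h2 := LinearMap.congr_fun (f.comm i) x
    simp only [LinearMap.comp_apply] at h1 h2 ⊢
    rw [h1, h2]⟩

def KHom.Mono {A B : KRep k n} (φ : KHom A B) : Prop :=
  Function.Injective φ.g1 ∧ Function.Injective φ.g2

def KHom.Epi {A B : KRep k n} (φ : KHom A B) : Prop :=
  Function.Surjective φ.g1 ∧ Function.Surjective φ.g2

/-- A subrepresentation: subspaces stable under all the arrows. -/
structure KSub (A : KRep k n) where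
  W1 : Submodule k A.V1
  W2 : Submodule k A.V2
  hmap : ∀ i, ∀ x ∈ W2, A.f i x ∈ W1

/-- A subrepresentation as a representation in its own right. -/
def KSub.toRep {A : KRep k n} (U : KSub A) : KRep k n where
  V1 := U.W1
  V2 := U.W2
  f := fun i => (A.f i).restrict (U.hmap i)

/-- Strict inclusion of subrepresentations. -/
def KSub.sLT {A : KRep k n} (U W : KSub A) : Prop :=
  (U.W1 ≤ W.W1 ∧ U.W2 ≤ W.W2) ∧ (U.W1 ≠ W.W1 ∨ U.W2 ≠ W.W2)

/-- Indecomposability: nonzero, and any direct sum decomposition into two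
subrepresentations is trivial. -/
def KIndec (A : KRep k n) : Prop :=
  (Nontrivial A.V1 ∨ Nontrivial A.V2) ∧
  ∀ U W : KSub A, IsCompl U.W1 W.W1 → IsCompl U.W2 W.W2 →
    (U.W1 = ⊥ ∧ U.W2 = ⊥) ∨ (W.W1 = ⊥ ∧ W.W2 = ⊥)

/-- The dimension vector `(dim V1, dim V2)`. -/
noncomputable def dimVec (A : KRep k n) : ℕ × ℕ :=
  (Module.finrank k A.V1, Module.finrank k A.V2)

/-- The length of a representation (= total dimension). -/
noncomputable def repLen (A : KRep k n) : ℕ :=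
  Module.finrank k A.V1 + Module.finrank k A.V2

def FinDimRep (A : KRep k n) : Prop :=
  FiniteDimensional k A.V1 ∧ FiniteDimensional k A.V2

/-- The sets of lengths arising from strict chains of indecomposable
subrepresentations of `A`. -/
def grChains (A : KRep k n) : Set (Set ℕ) :=
  {S | ∃ (t : ℕ) (c : Fin (t + 1) → KSub A),
    (∀ i j : Fin (t + 1), i < j → (c i).sLT (c j)) ∧
    (∀ i, KIndec (c i).toRep) ∧
    S = Set.range fun i => repLen (c i).toRep}

/-- `μ` is the Gabriel-Roiter measure of `A`. -/
def IsGR (A : KRep k n) (μ : Set ℕ) : Prop :=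
  μ ∈ grChains A ∧ ∀ S ∈ grChains A, grLE S μ

/-- Projective representations, via the lifting property. -/
def IsProjRep (P : KRep k n) : Prop :=
  ∀ (A B : KRep k n) (g : KHom A B) (h : KHom P B), g.Epi → ∃ l : KHom P A, g.comp l = h

/-- Injective representations, via the extension property. -/
def IsInjRep (I : KRep k n) : Prop :=
  ∀ (A B : KRep k n) (g : KHom A B) (h : KHom A I), g.Mono → ∃ l : KHom B I, l.comp g = h

/-- `Z` is the Auslander-Reiten translate `τ X`: there is an almost split
(Auslander-Reiten) short exact sequence `0 → Z → E → X → 0`. -/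
def IsARTranslate (X Z : KRep k n) : Prop :=
  ∃ (E : KRep k n) (ι : KHom Z E) (π : KHom E X),
    ι.Mono ∧ π.Epi ∧
    LinearMap.range ι.g1 = LinearMap.ker π.g1 ∧
    LinearMap.range ι.g2 = LinearMap.ker π.g2 ∧
    KIndec Z ∧ KIndec X ∧
    (¬ ∃ s : KHom X E, π.comp s = KHom.idHom X) ∧
    (∀ (W : KRep k n) (h : KHom W X), (¬ ∃ s : KHom X W, h.comp s = KHom.idHom X) →
      ∃ l : KHom W E, π.comp l = h)

/-- Preprojective: some iterated AR translate is projective. -/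
def Preprojective (M : KRep k n) : Prop :=
  ∃ (r : ℕ) (T : Fin (r + 1) → KRep k n), T 0 = M ∧
    (∀ i : Fin r, IsARTranslate (T i.castSucc) (T i.succ)) ∧
    IsProjRep (T (Fin.last r))

/-- Preinjective: some iterated inverse AR translate is injective. -/
def Preinjective (M : KRep k n) : Prop :=
  ∃ (r : ℕ) (T : Fin (r + 1) → KRep k n), T 0 = M ∧
    (∀ i : Fin r, IsARTranslate (T i.succ) (T i.castSucc)) ∧
    IsInjRep (T (Fin.last r))

/-- Regular: indecomposable, neither preprojective nor preinjective. -/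
def RegularRep (M : KRep k n) : Prop :=
  KIndec M ∧ ¬ Preprojective M ∧ ¬ Preinjective M

/-- The Gabriel-Roiter measure `μ_m = {1, 2, 4, 6, ..., 2m}`. -/
def muLow (m : ℕ) : Set ℕ := insert 1 {x | ∃ j, 1 ≤ j ∧ j ≤ m ∧ x = 2 * j}

/-- The Gabriel-Roiter measure `μ^m = {1, 2, 4, ..., 2m, 2m+1}`. -/
def muUp (m : ℕ) : Set ℕ := insert (2 * m + 1) (muLow m)

/-- `μ` is a Gabriel-Roiter measure for the `n`-Kronecker quiver over `k`. -/
def IsGRMeasureFor (k : Type) [Field k] (n : ℕ) (μ : Set ℕ) : Prop :=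
  ∃ M : KRep k n, FinDimRep M ∧ KIndec M ∧ IsGR M μ

-- ===== auxiliary development for the proof =====


open Module

lemma khom_apply {A B : KRep k n} (φ : KHom A B) (i : Fin n) (x : A.V2) :
    B.f i (φ.g2 x) = φ.g1 (A.f i x) := LinearMap.congr_fun (φ.comm i) x

/-- A linear map from `k` vanishing on a nonzero scalar is zero. -/
lemma lmap_zero_of {V : Type} [AddCommGroup V] [Module k V] (f : k →ₗ[k] V) {c : k}
    (hc : c ≠ 0) (h : f c = 0) : f = 0 := by
  refine LinearMap.ext fun x => ?_
  have hx : x = (x * c⁻¹) • c := by rw [smul_eq_mul, mul_assoc, inv_mul_cancel₀ hc, mul_one]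
  rw [hx, map_smul, h, smul_zero]
  rfl

/-- The common kernel of an AR-translate is zero. -/
lemma kzero {X Z : KRep k n} (h : IsARTranslate X Z) :
    ∀ z : Z.V2, (∀ j, Z.f j z = 0) → z = 0 := by
  obtain ⟨E, ι, π, hι, hπ, hr1, hr2, hiZ, hiX, hns, hlift⟩ := h
  intro z hz
  by_contra hz0
  -- Step 1: Z.V1 is trivial
  have hV1 : ∀ x : Z.V1, x = 0 := by
    obtain ⟨C, hC⟩ := Submodule.exists_isCompl (Submodule.span k {z})
    have hWsub : ∀ i : Fin n, ∀ x ∈ Submodule.span k ({z} : Set Z.V2),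
        Z.f i x ∈ (⊥ : Submodule k Z.V1) := by
      intro i x hx
      obtain ⟨c, rfl⟩ := Submodule.mem_span_singleton.mp hx
      simp [hz i]
    have hdec := hiZ.2 ⟨⊤, C, fun i x _ => Submodule.mem_top⟩
      ⟨⊥, Submodule.span k {z}, hWsub⟩ isCompl_top_bot hC.symm
    rcases hdec with ⟨h1, _⟩ | ⟨_, h2⟩
    · intro x
      have h1' : (⊤ : Submodule k Z.V1) = ⊥ := h1
      have hx : x ∈ (⊤ : Submodule k Z.V1) := Submodule.mem_top
      rw [h1'] at hx
      simpa using hx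
    · exfalso
      have : z ∈ (⊥ : Submodule k Z.V2) := h2 ▸ Submodule.mem_span_singleton_self z
      exact hz0 (by simpa using this)
  -- Step 2: retraction of ι.g2
  obtain ⟨C2, hC2⟩ := Submodule.exists_isCompl (LinearMap.range ι.g2)
  set e2 : Z.V2 ≃ₗ[k] LinearMap.range ι.g2 := LinearEquiv.ofInjective ι.g2 hι.2 with he2
  set ρ2 : E.V2 →ₗ[k] Z.V2 :=
    e2.symm.toLinearMap.comp ((LinearMap.range ι.g2).linearProjOfIsCompl C2 hC2) with hρ2
  have hρι : ∀ w : Z.V2, ρ2 (ι.g2 w) = w := by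
    intro w
    have h1 : ((LinearMap.range ι.g2).linearProjOfIsCompl C2 hC2) (ι.g2 w) =
        ⟨ι.g2 w, LinearMap.mem_range_self _ w⟩ :=
      Submodule.linearProjOfIsCompl_apply_left hC2 ⟨ι.g2 w, LinearMap.mem_range_self _ w⟩
    have h3 : (⟨ι.g2 w, LinearMap.mem_range_self _ w⟩ : LinearMap.range ι.g2) = e2 w :=
      Subtype.ext (by simp [he2])
    simp only [hρ2, LinearMap.comp_apply, h1, h3, LinearEquiv.coe_coe,
      LinearEquiv.symm_apply_apply]
  -- Step 3: π.g1 is bijective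
  have hπ1inj : Function.Injective π.g1 := by
    intro a b hab
    have hmem : a - b ∈ LinearMap.ker π.g1 := by
      simp [LinearMap.mem_ker, map_sub, hab]
    rw [← hr1] at hmem
    obtain ⟨y, hy⟩ := hmem
    rw [hV1 y, map_zero] at hy
    exact sub_eq_zero.mp hy.symm
  -- Step 4: π.g2 restricted to ker ρ2 is bijective
  have hqinj : ∀ x : E.V2, x ∈ LinearMap.ker ρ2 → π.g2 x = 0 → x = 0 := by
    intro x hx hπx
    have hmem : x ∈ LinearMap.ker π.g2 := hπx
    rw [← hr2] at hmem
    obtain ⟨y, hy⟩ := hmem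
    have h5 := hρι y
    rw [hy] at h5
    rw [LinearMap.mem_ker] at hx
    rw [hx] at h5
    rw [← hy, ← h5, map_zero]
  have hqsurj : ∀ m : X.V2, ∃ x, x ∈ LinearMap.ker ρ2 ∧ π.g2 x = m := by
    intro m
    obtain ⟨e, he⟩ := hπ.2 m
    refine ⟨e - ι.g2 (ρ2 e), ?_, ?_⟩
    · rw [LinearMap.mem_ker, map_sub, hρι, sub_self]
    · have h6 : π.g2 (ι.g2 (ρ2 e)) = 0 := by
        have : ι.g2 (ρ2 e) ∈ LinearMap.ker π.g2 := hr2 ▸ LinearMap.mem_range_self _ _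
        exact this
      rw [map_sub, he, h6, sub_zero]
  -- Step 5: build the section
  let K2 := LinearMap.ker ρ2
  let q : K2 →ₗ[k] X.V2 := π.g2.comp K2.subtype
  have hqbij : Function.Bijective q := by
    constructor
    · intro a b hab
      have h7 : (a : E.V2) - b ∈ K2 := K2.sub_mem a.2 b.2
      have h8 : π.g2 ((a : E.V2) - b) = 0 := by
        rw [map_sub]
        simpa [q, sub_eq_zero] using hab
      have := hqinj _ h7 h8
      exact Subtype.ext (sub_eq_zero.mp this)
    · intro m
      obtain ⟨x, hx1, hx2⟩ := hqsurj m
      exact ⟨⟨x, hx1⟩, hx2⟩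
  let eq2 := LinearEquiv.ofBijective q hqbij
  let e1 := LinearEquiv.ofBijective π.g1 ⟨hπ1inj, hπ.1⟩
  let s1 : X.V1 →ₗ[k] E.V1 := e1.symm.toLinearMap
  let s2 : X.V2 →ₗ[k] E.V2 := K2.subtype.comp eq2.symm.toLinearMap
  have hπs1 : ∀ y, π.g1 (s1 y) = y := fun y => e1.apply_symm_apply y
  have hπs2 : ∀ m, π.g2 (s2 m) = m := fun m => eq2.apply_symm_apply m
  have hcomm : ∀ i, (E.f i).comp s2 = s1.comp (X.f i) := by
    intro i
    ext m
    apply hπ1inj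
    have hl : π.g1 (E.f i (s2 m)) = X.f i (π.g2 (s2 m)) := (khom_apply π i (s2 m)).symm
    simp only [LinearMap.comp_apply]
    rw [hl, hπs2, hπs1]
  exact hns ⟨⟨s1, s2, hcomm⟩, by
    apply KHom.ext
    · exact LinearMap.ext fun y => hπs1 y
    · exact LinearMap.ext fun m => hπs2 m⟩

-- ============ concrete (1,2)-dimensional representations ============

/-- The representation with `V1 = k`, `V2 = k²` and structure maps `g`. -/
@[reducible] def mkR (g : Fin n → ((Fin 2 → k) →ₗ[k] k)) : KRep k n where
  V1 := k
  V2 := Fin 2 → k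
  f := g

/-- zero common kernel for the data of a concrete representation -/
def Kcond (g : Fin n → ((Fin 2 → k) →ₗ[k] k)) : Prop :=
  ∀ w : Fin 2 → k, (∀ j, g j w = 0) → w = 0

/-- the two data sets do not give isomorphic representations -/
def IsoContra (gA gB : Fin n → ((Fin 2 → k) →ₗ[k] k)) : Prop :=
  ∀ (φ1 : k →ₗ[k] k) (φ2 : (Fin 2 → k) →ₗ[k] (Fin 2 → k)),
    Function.Bijective φ1 → Function.Bijective φ2 →
    (∀ j, (gB j).comp φ2 = φ1.comp (gA j)) → False

/-- `φ` is the cocycle of a non-split extension of `X` by `mkR g`. -/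
def NonSplitCo (X : KRep k n) (g : Fin n → ((Fin 2 → k) →ₗ[k] k))
    (φ : Fin n → (X.V2 →ₗ[k] k)) : Prop :=
  ¬ ∃ (σ1 : X.V1 →ₗ[k] k) (σ2 : X.V2 →ₗ[k] (Fin 2 → k)),
      ∀ j, φ j = σ1.comp (X.f j) - (g j).comp σ2

/-- Any nonzero hom from a concrete brick into a module with zero common kernel is mono. -/
lemma mono_of_nonzero {g : Fin n → ((Fin 2 → k) →ₗ[k] k)} (hK : Kcond g)
    {Z : KRep k n} (hKZ : ∀ z : Z.V2, (∀ j, Z.f j z = 0) → z = 0)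
    (m : KHom (mkR g) Z) (hnz : ¬ (m.g1 = 0 ∧ m.g2 = 0)) :
    Function.Injective m.g1 ∧ Function.Injective m.g2 := by
  have hcomm : ∀ j w, Z.f j (m.g2 w) = m.g1 (g j w) := fun j w => khom_apply m j w
  have hg1z : m.g1 = 0 → m.g2 = 0 := by
    intro h0
    refine LinearMap.ext fun w => ?_
    refine hKZ (m.g2 w) fun j => ?_
    rw [hcomm j w, h0]
    rfl
  have hg2inj : Function.Injective m.g2 := by
    rw [← LinearMap.ker_eq_bot]
    rw [Submodule.eq_bot_iff]
    intro w hw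
    by_contra hw0
    obtain ⟨j0, hj0⟩ : ∃ j0, g j0 w ≠ 0 := by
      by_contra hall
      push_neg at hall
      exact hw0 (hK w hall)
    rw [LinearMap.mem_ker] at hw
    have h1 : m.g1 (g j0 w) = 0 := by rw [← hcomm j0 w, hw, map_zero]
    have h2 : m.g1 = 0 := lmap_zero_of m.g1 hj0 h1
    exact hnz ⟨h2, hg1z h2⟩
  refine ⟨?_, hg2inj⟩
  rw [← LinearMap.ker_eq_bot, Submodule.eq_bot_iff]
  intro c hc
  rw [LinearMap.mem_ker] at hc
  by_contra hc0
  have h2 : m.g1 = 0 := lmap_zero_of m.g1 hc0 hc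
  have h3 : m.g2 = 0 := hg1z h2
  -- but then g2 is injective and zero on a nontrivial space
  have : (fun _ => 1 : Fin 2 → k) = 0 := by
    apply hg2inj
    rw [h3]
    simp
  have := congrFun this 0
  simp at this

/-- If two non-isomorphic concrete bricks embed into `Z`, then `repLen Z ≥ 4`. -/
lemma replen4 {Z : KRep k n} [FiniteDimensional k Z.V1] [FiniteDimensional k Z.V2]
    {gA gB : Fin n → ((Fin 2 → k) →ₗ[k] k)} (hiso : IsoContra gA gB)
    (mA : KHom (mkR gA) Z) (hA1 : Function.Injective mA.g1) (hA2 : Function.Injective mA.g2)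
    (mB : KHom (mkR gB) Z) (hB1 : Function.Injective mB.g1) (hB2 : Function.Injective mB.g2) :
    4 ≤ repLen Z := by
  by_contra hlt
  push_neg at hlt
  have frk : finrank k k = 1 := Module.finrank_self k
  have frp : finrank k (Fin 2 → k) = 2 := by
    rw [finrank_pi]; simp
  have eA1 : finrank k ↥(LinearMap.range mA.g1) = 1 :=
    (LinearMap.finrank_range_of_inj hA1).trans frk
  have eA2 : finrank k ↥(LinearMap.range mA.g2) = 2 :=
    (LinearMap.finrank_range_of_inj hA2).trans frp
  have hd1 : 1 ≤ finrank k Z.V1 := eA1 ▸ (LinearMap.range mA.g1).finrank_le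
  have hd2 : 2 ≤ finrank k Z.V2 := eA2 ▸ (LinearMap.range mA.g2).finrank_le
  have hrl : repLen Z < 4 := hlt
  unfold repLen at hrl
  have hZ1 : finrank k Z.V1 = 1 := by omega
  have hZ2 : finrank k Z.V2 = 2 := by omega
  have sA1 : Function.Surjective mA.g1 := by
    rw [← LinearMap.range_eq_top]
    exact Submodule.eq_top_of_finrank_eq (by rw [eA1, hZ1])
  have sA2 : Function.Surjective mA.g2 := by
    rw [← LinearMap.range_eq_top]
    refine Submodule.eq_top_of_finrank_eq ?_
    rw [hZ2]
    exact (LinearMap.finrank_range_of_inj hA2).trans frp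
  have sB1 : Function.Surjective mB.g1 := by
    rw [← LinearMap.range_eq_top]
    refine Submodule.eq_top_of_finrank_eq ?_
    rw [hZ1]
    exact (LinearMap.finrank_range_of_inj hB1).trans frk
  have sB2 : Function.Surjective mB.g2 := by
    rw [← LinearMap.range_eq_top]
    refine Submodule.eq_top_of_finrank_eq ?_
    rw [hZ2]
    exact (LinearMap.finrank_range_of_inj hB2).trans frp
  let eB1 := LinearEquiv.ofBijective mB.g1 ⟨hB1, sB1⟩
  let eB2 := LinearEquiv.ofBijective mB.g2 ⟨hB2, sB2⟩
  refine hiso (eB1.symm.toLinearMap.comp mA.g1) (eB2.symm.toLinearMap.comp mA.g2) ?_ ?_ ?_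
  · show Function.Bijective (⇑eB1.symm ∘ ⇑mA.g1)
    exact Function.Bijective.comp eB1.symm.bijective ⟨hA1, sA1⟩
  · show Function.Bijective (⇑eB2.symm ∘ ⇑mA.g2)
    exact Function.Bijective.comp eB2.symm.bijective ⟨hA2, sA2⟩
  · intro j
    refine LinearMap.ext fun w => ?_
    simp only [LinearMap.comp_apply, LinearEquiv.coe_coe]
    apply hB1
    have k1 : ∀ x, mB.g1 (eB1.symm x) = x := fun x => eB1.apply_symm_apply x
    have k2 : ∀ x, mB.g2 (eB2.symm x) = x := fun x => eB2.apply_symm_apply x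
    calc mB.g1 (gB j (eB2.symm (mA.g2 w)))
        = Z.f j (mB.g2 (eB2.symm (mA.g2 w))) := (khom_apply mB j _).symm
      _ = Z.f j (mA.g2 w) := by rw [k2]
      _ = mA.g1 (gA j w) := khom_apply mA j w
      _ = mB.g1 (eB1.symm (mA.g1 (gA j w))) := (k1 _).symm

/-- Dimension count: a non-split cocycle at the level of the concrete bricks exists. -/
lemma exists_nonsplit_R (hn : 3 ≤ n) (gR gN : Fin n → ((Fin 2 → k) →ₗ[k] k)) :
    ∃ ψ : Fin n → ((Fin 2 → k) →ₗ[k] k),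
      ¬ ∃ (α : k →ₗ[k] k) (β : (Fin 2 → k) →ₗ[k] (Fin 2 → k)),
        ∀ j, ψ j = α.comp (gR j) - (gN j).comp β := by
  let Θ : ((k →ₗ[k] k) × ((Fin 2 → k) →ₗ[k] (Fin 2 → k))) →ₗ[k]
      (Fin n → ((Fin 2 → k) →ₗ[k] k)) := LinearMap.pi (fun j =>
    ((LinearMap.lcomp k k (gR j)).comp
        (LinearMap.fst k (k →ₗ[k] k) ((Fin 2 → k) →ₗ[k] (Fin 2 → k)))) -
    ((LinearMap.llcomp k (Fin 2 → k) (Fin 2 → k) k (gN j)).comp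
        (LinearMap.snd k (k →ₗ[k] k) ((Fin 2 → k) →ₗ[k] (Fin 2 → k)))))
  have frp : finrank k (Fin 2 → k) = 2 := by rw [finrank_pi]; simp
  have hD : finrank k ((k →ₗ[k] k) × ((Fin 2 → k) →ₗ[k] (Fin 2 → k))) = 5 := by
    rw [Module.finrank_prod, Module.finrank_linearMap, Module.finrank_linearMap,
      Module.finrank_self, frp]
  have hC : finrank k (Fin n → ((Fin 2 → k) →ₗ[k] k)) = 2 * n := by
    rw [Module.finrank_pi_fintype]
    simp only [Module.finrank_linearMap, Module.finrank_self, frp]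
    simp [mul_comm]
  have hrange : LinearMap.range Θ ≠ ⊤ := by
    intro htop
    have h1 : finrank k ↥(LinearMap.range Θ) ≤ 5 := hD ▸ Θ.finrank_range_le
    have h2 : finrank k ↥(LinearMap.range Θ) = 2 * n := by
      rw [htop, finrank_top, hC]
    omega
  obtain ⟨φ, hφ⟩ : ∃ φ, φ ∉ LinearMap.range Θ := by
    by_contra hall
    push_neg at hall
    exact hrange (Submodule.eq_top_iff'.mpr hall)
  refine ⟨φ, ?_⟩
  rintro ⟨α, β, hs⟩
  refine hφ ⟨(α, β), ?_⟩
  funext j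
  have : Θ (α, β) j = α.comp (gR j) - (gN j).comp β := by
    show (LinearMap.pi _) (α, β) j = _
    rw [LinearMap.pi_apply]
    simp only [LinearMap.sub_apply, LinearMap.comp_apply, LinearMap.fst_apply,
      LinearMap.snd_apply, LinearMap.lcomp_apply', LinearMap.llcomp_apply']
  rw [this, ← hs j]


/-- Transfer a non-split cocycle along a mono `mkR gR → X`. -/
lemma cocycle_transfer {X : KRep k n} {gR : Fin n → ((Fin 2 → k) →ₗ[k] k)}
    (mR : KHom (mkR gR) X) (hinj2 : Function.Injective mR.g2)
    (gN : Fin n → ((Fin 2 → k) →ₗ[k] k))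
    {ψ : Fin n → ((Fin 2 → k) →ₗ[k] k)}
    (hψ : ¬ ∃ (α : k →ₗ[k] k) (β : (Fin 2 → k) →ₗ[k] (Fin 2 → k)),
        ∀ j, ψ j = α.comp (gR j) - (gN j).comp β) :
    ∃ φ : Fin n → (X.V2 →ₗ[k] k), NonSplitCo X gN φ := by
  obtain ⟨C, hC⟩ := Submodule.exists_isCompl (LinearMap.range mR.g2)
  let e : (Fin 2 → k) ≃ₗ[k] LinearMap.range mR.g2 := LinearEquiv.ofInjective mR.g2 hinj2
  let r : X.V2 →ₗ[k] (Fin 2 → k) :=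
    e.symm.toLinearMap.comp ((LinearMap.range mR.g2).linearProjOfIsCompl C hC)
  have hr : ∀ w : Fin 2 → k, r (mR.g2 w) = w := by
    intro w
    have h1 : ((LinearMap.range mR.g2).linearProjOfIsCompl C hC) (mR.g2 w) =
        ⟨mR.g2 w, LinearMap.mem_range_self _ w⟩ :=
      Submodule.linearProjOfIsCompl_apply_left hC ⟨mR.g2 w, LinearMap.mem_range_self _ w⟩
    have h3 : (⟨mR.g2 w, LinearMap.mem_range_self _ w⟩ : LinearMap.range mR.g2) = e w :=
      Subtype.ext (by rfl)
    simp only [r, LinearMap.comp_apply, h1, h3, LinearEquiv.coe_coe,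
      LinearEquiv.symm_apply_apply]
  refine ⟨fun j => (ψ j).comp r, ?_⟩
  rintro ⟨σ1, σ2, hs⟩
  refine hψ ⟨σ1.comp mR.g1, σ2.comp mR.g2, fun j => ?_⟩
  refine LinearMap.ext fun w => ?_
  have h4 := LinearMap.congr_fun (hs j) (mR.g2 w)
  simp only [LinearMap.comp_apply, LinearMap.sub_apply, hr w] at h4 ⊢
  rw [h4]
  have h5 : X.f j (mR.g2 w) = mR.g1 (gR j w) := khom_apply mR j w
  rw [h5]

/-- From a non-split cocycle over `X`, get a nonzero map from the brick into `τX`. -/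
lemma step_mono {X Z : KRep k n} (hAR : IsARTranslate X Z)
    (g : Fin n → ((Fin 2 → k) →ₗ[k] k))
    (φ : Fin n → (X.V2 →ₗ[k] k)) (hφ : NonSplitCo X g φ) :
    ∃ m : KHom (mkR g) Z, ¬ (m.g1 = 0 ∧ m.g2 = 0) := by
  obtain ⟨E, ι, π, hι, hπ, hr1, hr2, hiZ, hiX, hns, hlift⟩ := hAR
  -- the extension representation Y
  let Y : KRep k n :=
    { V1 := k × X.V1
      V2 := (Fin 2 → k) × X.V2
      f := fun j => LinearMap.prod
        (((g j).comp (LinearMap.fst k (Fin 2 → k) X.V2)) +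
          ((φ j).comp (LinearMap.snd k (Fin 2 → k) X.V2)))
        ((X.f j).comp (LinearMap.snd k (Fin 2 → k) X.V2)) }
  have hYf : ∀ j (w : Fin 2 → k) (y : X.V2),
      Y.f j (w, y) = (g j w + φ j y, X.f j y) := by
    intro j w y
    simp [Y, LinearMap.prod_apply]
  let p : KHom Y X :=
    ⟨LinearMap.snd k k X.V1, LinearMap.snd k (Fin 2 → k) X.V2, by
      intro i
      refine LinearMap.ext fun w => ?_
      simp [Y, LinearMap.prod_apply]⟩
  have hps : ¬ ∃ s : KHom X Y, p.comp s = KHom.idHom X := by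
    rintro ⟨s, hs⟩
    have hs1 : ∀ x : X.V1, (s.g1 x).2 = x := by
      intro x
      have := congrArg KHom.g1 hs
      exact LinearMap.congr_fun this x
    have hs2 : ∀ y : X.V2, (s.g2 y).2 = y := by
      intro y
      have := congrArg KHom.g2 hs
      exact LinearMap.congr_fun this y
    refine hφ ⟨(LinearMap.fst k k X.V1).comp s.g1,
      (LinearMap.fst k (Fin 2 → k) X.V2).comp s.g2, fun j => ?_⟩
    refine LinearMap.ext fun y => ?_
    have hcy : Y.f j (s.g2 y) = s.g1 (X.f j y) := khom_apply s j y
    have hexp : s.g2 y = ((s.g2 y).1, y) := by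
      refine Prod.ext rfl (hs2 y)
    rw [hexp] at hcy
    rw [hYf j (s.g2 y).1 y] at hcy
    have h1 := congrArg Prod.fst hcy
    simp only [LinearMap.comp_apply, LinearMap.sub_apply, LinearMap.fst_apply]
    have h2 : g j (s.g2 y).1 + φ j y = (s.g1 (X.f j y)).1 := h1
    linear_combination h2
  obtain ⟨l, hl⟩ := hlift Y p hps
  have hπl1 : ∀ v : Y.V1, π.g1 (l.g1 v) = v.2 := by
    intro v
    have := congrArg KHom.g1 hl
    exact LinearMap.congr_fun this v
  have hπl2 : ∀ v : Y.V2, π.g2 (l.g2 v) = v.2 := by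
    intro v
    have := congrArg KHom.g2 hl
    exact LinearMap.congr_fun this v
  -- the restriction of l to the brick lands in Z
  let lj1 : k →ₗ[k] E.V1 := l.g1.comp (LinearMap.inl k k X.V1)
  let lj2 : (Fin 2 → k) →ₗ[k] E.V2 := l.g2.comp (LinearMap.inl k (Fin 2 → k) X.V2)
  have hmem1 : ∀ c : k, lj1 c ∈ LinearMap.range ι.g1 := by
    intro c
    rw [hr1, LinearMap.mem_ker]
    exact hπl1 (c, 0)
  have hmem2 : ∀ w : Fin 2 → k, lj2 w ∈ LinearMap.range ι.g2 := by
    intro w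
    rw [hr2, LinearMap.mem_ker]
    exact hπl2 (w, 0)
  let e1 : Z.V1 ≃ₗ[k] LinearMap.range ι.g1 := LinearEquiv.ofInjective ι.g1 hι.1
  let e2 : Z.V2 ≃ₗ[k] LinearMap.range ι.g2 := LinearEquiv.ofInjective ι.g2 hι.2
  let m1 : k →ₗ[k] Z.V1 := e1.symm.toLinearMap.comp (lj1.codRestrict _ hmem1)
  let m2 : (Fin 2 → k) →ₗ[k] Z.V2 := e2.symm.toLinearMap.comp (lj2.codRestrict _ hmem2)
  have hι1m : ∀ c : k, ι.g1 (m1 c) = lj1 c := by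
    intro c
    show ι.g1 (e1.symm ⟨lj1 c, hmem1 c⟩) = lj1 c
    have : ι.g1 (e1.symm ⟨lj1 c, hmem1 c⟩) = ((e1 (e1.symm ⟨lj1 c, hmem1 c⟩) : _) : E.V1) := rfl
    rw [this, e1.apply_symm_apply]
  have hι2m : ∀ w, ι.g2 (m2 w) = lj2 w := by
    intro w
    show ι.g2 (e2.symm ⟨lj2 w, hmem2 w⟩) = lj2 w
    have : ι.g2 (e2.symm ⟨lj2 w, hmem2 w⟩) = ((e2 (e2.symm ⟨lj2 w, hmem2 w⟩) : _) : E.V2) := rfl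
    rw [this, e2.apply_symm_apply]
  have hmcomm : ∀ i, (Z.f i).comp m2 = m1.comp ((mkR g).f i) := by
    intro i
    refine LinearMap.ext fun w => ?_
    apply hι.1
    simp only [LinearMap.comp_apply]
    have c1 : ι.g1 (Z.f i (m2 w)) = E.f i (ι.g2 (m2 w)) := (khom_apply ι i (m2 w)).symm
    rw [c1, hι2m w]
    have c2 : lj2 w = l.g2 (w, 0) := rfl
    rw [c2]
    have c3 : E.f i (l.g2 (w, 0)) = l.g1 (Y.f i (w, 0)) := khom_apply l i (w, 0)
    rw [c3]
    have c4 : Y.f i ((w : Fin 2 → k), (0 : X.V2)) = (g i w, 0) := by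
      rw [hYf]
      simp
    rw [c4, hι1m]
    rfl
  refine ⟨⟨m1, m2, hmcomm⟩, ?_⟩
  rintro ⟨hm1, hm2⟩
  -- then l vanishes on the brick, so π splits
  have hlj1 : ∀ c, lj1 c = 0 := by
    intro c
    rw [← hι1m c]
    have hm1' : m1 = 0 := hm1
    rw [hm1']
    simp
  have hlj2 : ∀ w, lj2 w = 0 := by
    intro w
    rw [← hι2m w]
    have hm2' : m2 = 0 := hm2
    rw [hm2']
    simp
  let s1 : X.V1 →ₗ[k] E.V1 := l.g1.comp (LinearMap.inr k k X.V1)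
  let s2 : X.V2 →ₗ[k] E.V2 := l.g2.comp (LinearMap.inr k (Fin 2 → k) X.V2)
  have hscomm : ∀ i, (E.f i).comp s2 = s1.comp (X.f i) := by
    intro i
    refine LinearMap.ext fun y => ?_
    show E.f i (l.g2 (0, y)) = l.g1 (0, X.f i y)
    have c3 : E.f i (l.g2 (0, y)) = l.g1 (Y.f i (0, y)) := khom_apply l i (0, y)
    rw [c3]
    have c4 : Y.f i ((0 : Fin 2 → k), y) = (φ i y, X.f i y) := by
      rw [hYf]
      simp
    rw [c4]
    have c5 : ((φ i y, X.f i y) : Y.V1) = (φ i y, 0) + (0, X.f i y) := by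
      simp
    rw [c5, map_add]
    have c6 : l.g1 ((φ i y : k), (0 : X.V1)) = lj1 (φ i y) := rfl
    rw [c6, hlj1, zero_add]
  refine hns ⟨⟨s1, s2, hscomm⟩, ?_⟩
  apply KHom.ext
  · exact LinearMap.ext fun y => hπl1 (0, y)
  · exact LinearMap.ext fun y => hπl2 (0, y)

/-- The standard pair of non-isomorphic concrete bricks. -/
lemma pair_step (hn : 3 ≤ n) :
    ∃ gA gB : Fin n → ((Fin 2 → k) →ₗ[k] k), Kcond gA ∧ Kcond gB ∧ IsoContra gA gB := by
  let p0 : (Fin 2 → k) →ₗ[k] k := LinearMap.proj 0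
  let p1 : (Fin 2 → k) →ₗ[k] k := LinearMap.proj 1
  let gA : Fin n → ((Fin 2 → k) →ₗ[k] k) :=
    fun j => if j.1 = 0 then p0 else if j.1 = 1 then p1 else 0
  let gB : Fin n → ((Fin 2 → k) →ₗ[k] k) :=
    fun j => if j.1 = 0 then p0 else if j.1 = 1 then p1 else if j.1 = 2 then p0 else 0
  have hA0 : gA ⟨0, by omega⟩ = p0 := by simp [gA]
  have hA1 : gA ⟨1, by omega⟩ = p1 := by simp [gA]
  have hA2 : gA ⟨2, by omega⟩ = 0 := by simp [gA]
  have hB0 : gB ⟨0, by omega⟩ = p0 := by simp [gB]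
  have hB1 : gB ⟨1, by omega⟩ = p1 := by simp [gB]
  have hB2 : gB ⟨2, by omega⟩ = p0 := by simp [gB]
  refine ⟨gA, gB, ?_, ?_, ?_⟩
  · intro w hw
    have h0 := hw ⟨0, by omega⟩
    have h1 := hw ⟨1, by omega⟩
    rw [hA0] at h0; rw [hA1] at h1
    funext i
    fin_cases i
    · exact h0
    · exact h1
  · intro w hw
    have h0 := hw ⟨0, by omega⟩
    have h1 := hw ⟨1, by omega⟩
    rw [hB0] at h0; rw [hB1] at h1
    funext i
    fin_cases i
    · exact h0
    · exact h1
  · intro φ1 φ2 hb1 hb2 hc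
    have hcc := hc ⟨2, by omega⟩
    rw [hA2, hB2] at hcc
    obtain ⟨w, hw⟩ := hb2.2 (Pi.single 0 1)
    have h3 := LinearMap.congr_fun hcc w
    simp only [LinearMap.comp_apply] at h3
    rw [hw] at h3
    simp only [LinearMap.zero_apply, map_zero] at h3
    simp [p0] at h3

/-- Base case: adapted pair of bricks with non-split cocycles over `X` of dim `(1,1)`. -/
lemma base_good {X : KRep k n} (hn : 3 ≤ n) (hfd : FinDimRep X) (hX : KIndec X)
    (hdim : dimVec X = (1,1)) :
    ∃ (gA gB : Fin n → ((Fin 2 → k) →ₗ[k] k)) (φA φB : Fin n → (X.V2 →ₗ[k] k)),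
      Kcond gA ∧ Kcond gB ∧ IsoContra gA gB ∧ NonSplitCo X gA φA ∧ NonSplitCo X gB φB := by
  haveI := hfd.1; haveI := hfd.2
  have h1 : finrank k X.V1 = 1 := by
    have := congrArg Prod.fst hdim; simpa [dimVec] using this
  have h2 : finrank k X.V2 = 1 := by
    have := congrArg Prod.snd hdim; simpa [dimVec] using this
  let b1 : Basis (Fin 1) k X.V1 := Module.finBasisOfFinrankEq k X.V1 h1
  let b2 : Basis (Fin 1) k X.V2 := Module.finBasisOfFinrankEq k X.V2 h2
  let x1 := b1 0
  let x2 := b2 0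
  have hexp1 : ∀ y : X.V1, (b1.coord 0) y • x1 = y := by
    intro y
    have := b1.sum_repr y
    simpa [Basis.coord_apply, x1] using this
  have hexp2 : ∀ y : X.V2, (b2.coord 0) y • x2 = y := by
    intro y
    have := b2.sum_repr y
    simpa [Basis.coord_apply, x2] using this
  have hl2x2 : (b2.coord 0) x2 = 1 := by simp [x2, Basis.coord_apply]
  let lam : Fin n → k := fun j => (b1.coord 0) (X.f j x2)
  have key1 : ∀ j, X.f j x2 = lam j • x1 := fun j => (hexp1 (X.f j x2)).symm
  obtain ⟨js, hjs⟩ : ∃ js, lam js ≠ 0 := by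
    by_contra hall
    push_neg at hall
    have hf : ∀ j, X.f j = 0 := by
      intro j
      refine LinearMap.ext fun y => ?_
      rw [← hexp2 y, map_smul, key1 j, hall j, zero_smul, smul_zero]
      rfl
    have hdec := hX.2 ⟨⊤, ⊥, fun i x _ => Submodule.mem_top⟩
      ⟨⊥, ⊤, fun i x _ => by rw [hf i]; exact Submodule.zero_mem ⊥⟩
      isCompl_top_bot isCompl_bot_top
    rcases hdec with ⟨hA, _⟩ | ⟨_, hB⟩
    · have hA' : (⊤ : Submodule k X.V1) = ⊥ := hA
      have h5 := congrArg (fun S : Submodule k X.V1 => finrank k S) hA'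
      simp only [finrank_top, finrank_bot] at h5
      rw [h1] at h5; exact one_ne_zero h5
    · have hB' : (⊤ : Submodule k X.V2) = ⊥ := hB
      have h5 := congrArg (fun S : Submodule k X.V2 => finrank k S) hB'
      simp only [finrank_top, finrank_bot] at h5
      rw [h2] at h5; exact one_ne_zero h5
  let j1 : Fin n := if js.1 = 0 then ⟨1, by omega⟩ else ⟨0, by omega⟩
  let j2 : Fin n := if js.1 = 2 then ⟨1, by omega⟩ else ⟨2, by omega⟩
  have hj1s : j1 ≠ js := by
    by_cases h : js.1 = 0 <;> simp [j1, h, Fin.ext_iff] <;> omega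
  have hj2s : j2 ≠ js := by
    by_cases h : js.1 = 2 <;> simp [j2, h, Fin.ext_iff] <;> omega
  have hj12 : j1 ≠ j2 := by
    by_cases h : js.1 = 0 <;> by_cases h' : js.1 = 2 <;>
      simp [j1, j2, h, h', Fin.ext_iff] <;> omega
  let p0 : (Fin 2 → k) →ₗ[k] k := LinearMap.proj 0
  let p1 : (Fin 2 → k) →ₗ[k] k := LinearMap.proj 1
  let dA : Fin n → k := fun j => if j = j1 then 1 else 0
  let dB : Fin n → k := fun j => if j = j2 then 1 else 0
  let gA : Fin n → ((Fin 2 → k) →ₗ[k] k) := fun j => lam j • p0 + dA j • p1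
  let gB : Fin n → ((Fin 2 → k) →ₗ[k] k) := fun j => lam j • p0 + dB j • p1
  have hgA : ∀ j w, gA j w = lam j * w 0 + dA j * w 1 := by
    intro j w; simp [gA, p0, p1, smul_eq_mul]
  have hgB : ∀ j w, gB j w = lam j * w 0 + dB j * w 1 := by
    intro j w; simp [gB, p0, p1, smul_eq_mul]
  have hdAs : dA js = 0 := if_neg fun h => hj1s h.symm
  have hdAj1 : dA j1 = 1 := if_pos rfl
  have hdAj2 : dA j2 = 0 := if_neg fun h => hj12 h.symm
  have hdBs : dB js = 0 := if_neg fun h => hj2s h.symm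
  have hdBj1 : dB j1 = 0 := if_neg hj12
  have hdBj2 : dB j2 = 1 := if_pos rfl
  have hKA : Kcond gA := by
    intro w hw
    have h0 := hw js
    rw [hgA js w, hdAs] at h0
    have hw0 : w 0 = 0 := by
      have h6 : lam js * w 0 = 0 := by linear_combination h0
      exact (mul_eq_zero.mp h6).resolve_left hjs
    have h1' := hw j1
    rw [hgA j1 w, hdAj1, hw0] at h1'
    have hw1 : w 1 = 0 := by linear_combination h1'
    funext i
    fin_cases i
    · exact hw0
    · exact hw1
  have hKB : Kcond gB := by
    intro w hw
    have h0 := hw js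
    rw [hgB js w, hdBs] at h0
    have hw0 : w 0 = 0 := by
      have h6 : lam js * w 0 = 0 := by linear_combination h0
      exact (mul_eq_zero.mp h6).resolve_left hjs
    have h1' := hw j2
    rw [hgB j2 w, hdBj2, hw0] at h1'
    have hw1 : w 1 = 0 := by linear_combination h1'
    funext i
    fin_cases i
    · exact hw0
    · exact hw1
  have hIC : IsoContra gA gB := by
    intro φ1 φ2 hb1 hb2 hc
    have hc1 : φ1 1 ≠ 0 := by
      intro h
      exact one_ne_zero (hb1.1 (by rw [h, map_zero]))
    have hA : ∀ j, gA j (Pi.single 1 1) = dA j := by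
      intro j; rw [hgA]; simp
    have hW : ∀ j, gB j (φ2 (Pi.single 1 1)) = φ1 (dA j) := by
      intro j
      have h7 := LinearMap.congr_fun (hc j) (Pi.single 1 1)
      simp only [LinearMap.comp_apply] at h7
      rw [hA j] at h7
      exact h7
    have hWs := hW js
    rw [hgB js _, hdAs, hdBs, map_zero] at hWs
    have hW0 : (φ2 (Pi.single 1 1)) 0 = 0 := by
      have h6 : lam js * (φ2 (Pi.single 1 1)) 0 = 0 := by linear_combination hWs
      exact (mul_eq_zero.mp h6).resolve_left hjs
    have hW1 := hW j1
    rw [hgB j1 _, hdAj1, hdBj1, hW0] at hW1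
    exact hc1 (by linear_combination -hW1)
  refine ⟨gA, gB, fun j => dB j • b2.coord 0, fun j => dA j • b2.coord 0,
    hKA, hKB, hIC, ?_, ?_⟩
  · rintro ⟨σ1, σ2, hs⟩
    have hev : ∀ j, dB j =
        lam j * (σ1 x1) - (lam j * (σ2 x2 0) + dA j * (σ2 x2 1)) := by
      intro j
      have h7 := LinearMap.congr_fun (hs j) x2
      simp only [LinearMap.smul_apply, smul_eq_mul, LinearMap.sub_apply,
        LinearMap.comp_apply] at h7
      rw [hl2x2, mul_one, key1 j, map_smul, smul_eq_mul, hgA j (σ2 x2)] at h7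
      exact h7
    have e1 := hev js
    rw [hdBs, hdAs] at e1
    have hsub : σ1 x1 - σ2 x2 0 = 0 := by
      have h6 : lam js * (σ1 x1 - σ2 x2 0) = 0 := by linear_combination -e1
      exact (mul_eq_zero.mp h6).resolve_left hjs
    have e3 := hev j2
    rw [hdBj2, hdAj2] at e3
    exact one_ne_zero (by linear_combination e3 + lam j2 * hsub)
  · rintro ⟨σ1, σ2, hs⟩
    have hev : ∀ j, dA j =
        lam j * (σ1 x1) - (lam j * (σ2 x2 0) + dB j * (σ2 x2 1)) := by
      intro j
      have h7 := LinearMap.congr_fun (hs j) x2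
      simp only [LinearMap.smul_apply, smul_eq_mul, LinearMap.sub_apply,
        LinearMap.comp_apply] at h7
      rw [hl2x2, mul_one, key1 j, map_smul, smul_eq_mul, hgB j (σ2 x2)] at h7
      exact h7
    have e1 := hev js
    rw [hdBs, hdAs] at e1
    have hsub : σ1 x1 - σ2 x2 0 = 0 := by
      have h6 : lam js * (σ1 x1 - σ2 x2 0) = 0 := by linear_combination -e1
      exact (mul_eq_zero.mp h6).resolve_left hjs
    have e3 := hev j1
    rw [hdBj1, hdAj1] at e3
    exact one_ne_zero (by linear_combination e3 + lam j1 * hsub)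

lemma sub_bot_or_top {V : Type} [AddCommGroup V] [Module k V] [FiniteDimensional k V]
    (h : finrank k V = 1) (S : Submodule k V) : S = ⊥ ∨ S = ⊤ := by
  by_cases hS : ∀ x ∈ S, x = (0 : V)
  · exact Or.inl ((Submodule.eq_bot_iff S).mpr hS)
  · right
    push_neg at hS
    obtain ⟨x, hxS, hx0⟩ := hS
    have hsp : Submodule.span k {x} = ⊤ :=
      Submodule.eq_top_of_finrank_eq (by rw [finrank_span_singleton hx0, h])
    rw [eq_top_iff, ← hsp, Submodule.span_le]
    simpa using hxS

lemma sub_subsingleton {V : Type} [AddCommGroup V] [Module k V] [Subsingleton V]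
    (S : Submodule k V) : S = ⊥ :=
  (Submodule.eq_bot_iff S).mpr fun x _ => Subsingleton.elim x 0

lemma compl_bot_of_top {V : Type} [AddCommGroup V] [Module k V] {p q : Submodule k V}
    (h : IsCompl p q) (hp : p = ⊤) : q = ⊥ := by
  rw [eq_bot_iff]
  intro x hx
  have hm : x ∈ p ⊓ q := Submodule.mem_inf.mpr ⟨by rw [hp]; exact Submodule.mem_top, hx⟩
  exact h.disjoint.le_bot hm

/-- Transfer of indecomposability along an isomorphism of representations. -/
lemma kindec_transfer {A B : KRep k n} (e : KHom A B)
    (h1 : Function.Bijective e.g1) (h2 : Function.Bijective e.g2)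
    (hB : KIndec B) : KIndec A := by
  have hback1 : ∀ p : Submodule k A.V1, Submodule.map e.g1 p = ⊥ → p = ⊥ := by
    intro p hp
    rw [Submodule.eq_bot_iff]
    intro x hx
    have : e.g1 x ∈ Submodule.map e.g1 p := Submodule.mem_map_of_mem hx
    rw [hp, Submodule.mem_bot] at this
    exact h1.1 (by rw [this, map_zero])
  have hback2 : ∀ p : Submodule k A.V2, Submodule.map e.g2 p = ⊥ → p = ⊥ := by
    intro p hp
    rw [Submodule.eq_bot_iff]
    intro x hx
    have : e.g2 x ∈ Submodule.map e.g2 p := Submodule.mem_map_of_mem hx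
    rw [hp, Submodule.mem_bot] at this
    exact h2.1 (by rw [this, map_zero])
  have hIC1 : ∀ (p q : Submodule k A.V1), IsCompl p q →
      IsCompl (Submodule.map e.g1 p) (Submodule.map e.g1 q) := by
    intro p q h
    constructor
    · rw [disjoint_iff, ← Submodule.map_inf _ h1.1, h.disjoint.eq_bot, Submodule.map_bot]
    · rw [codisjoint_iff, ← Submodule.map_sup, h.codisjoint.eq_top, Submodule.map_top,
        LinearMap.range_eq_top.mpr h1.2]
  have hIC2 : ∀ (p q : Submodule k A.V2), IsCompl p q →
      IsCompl (Submodule.map e.g2 p) (Submodule.map e.g2 q) := by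
    intro p q h
    constructor
    · rw [disjoint_iff, ← Submodule.map_inf _ h2.1, h.disjoint.eq_bot, Submodule.map_bot]
    · rw [codisjoint_iff, ← Submodule.map_sup, h.codisjoint.eq_top, Submodule.map_top,
        LinearMap.range_eq_top.mpr h2.2]
  constructor
  · rcases hB.1 with h | h
    · left
      obtain ⟨x, y, hxy⟩ := h
      obtain ⟨x', hx⟩ := h1.2 x
      obtain ⟨y', hy⟩ := h1.2 y
      exact ⟨x', y', fun hh => hxy (by rw [← hx, ← hy, hh])⟩
    · right
      obtain ⟨x, y, hxy⟩ := h
      obtain ⟨x', hx⟩ := h2.2 x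
      obtain ⟨y', hy⟩ := h2.2 y
      exact ⟨x', y', fun hh => hxy (by rw [← hx, ← hy, hh])⟩
  · intro U W hc1 hc2
    have hmapU : ∀ i, ∀ y ∈ Submodule.map e.g2 U.W2, B.f i y ∈ Submodule.map e.g1 U.W1 := by
      rintro i y ⟨x, hx, rfl⟩
      rw [khom_apply e i x]
      exact Submodule.mem_map_of_mem (U.hmap i x hx)
    have hmapW : ∀ i, ∀ y ∈ Submodule.map e.g2 W.W2, B.f i y ∈ Submodule.map e.g1 W.W1 := by
      rintro i y ⟨x, hx, rfl⟩
      rw [khom_apply e i x]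
      exact Submodule.mem_map_of_mem (W.hmap i x hx)
    have hdec := hB.2 ⟨Submodule.map e.g1 U.W1, Submodule.map e.g2 U.W2, hmapU⟩
      ⟨Submodule.map e.g1 W.W1, Submodule.map e.g2 W.W2, hmapW⟩
      (hIC1 _ _ hc1) (hIC2 _ _ hc2)
    rcases hdec with ⟨hu1, hu2⟩ | ⟨hw1, hw2⟩
    · exact Or.inl ⟨hback1 _ hu1, hback2 _ hu2⟩
    · exact Or.inr ⟨hback1 _ hw1, hback2 _ hw2⟩

/-- The main chain argument: a brick inside `Z` forces the GR measure to start with 1,2,3. -/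
lemma main_chain {Z : KRep k n} (hfdZ : FinDimRep Z) (hindZ : KIndec Z)
    {g : Fin n → ((Fin 2 → k) →ₗ[k] k)} (hK : Kcond g)
    (m : KHom (mkR g) Z) (hm1 : Function.Injective m.g1) (hm2 : Function.Injective m.g2)
    (hlen : 4 ≤ repLen Z) :
    ∀ μ : Set ℕ, IsGR Z μ →
      startsWith ({1,2,3} : Set ℕ) μ ∧ grLT ({1,2,3} : Set ℕ) μ := by
  haveI := hfdZ.1; haveI := hfdZ.2
  have hcommv : ∀ j w, Z.f j (m.g2 w) = m.g1 (g j w) := fun j w => khom_apply m j w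
  -- the distinguished vector
  have hv0 : (Pi.single 0 1 : Fin 2 → k) ≠ 0 := by
    intro h
    have := congrFun h 0
    simp at this
  set v : Fin 2 → k := Pi.single 0 1 with hvdef
  obtain ⟨j0, hj0⟩ : ∃ j0, g j0 v ≠ 0 := by
    by_contra hall; push_neg at hall; exact hv0 (hK v hall)
  have hm2v : m.g2 v ≠ 0 := fun h => hv0 (hm2 (by rw [h, map_zero]))
  set L : Submodule k Z.V1 := LinearMap.range m.g1 with hLdef
  set S1 : Submodule k Z.V2 := Submodule.span k {m.g2 v} with hS1def
  set S2 : Submodule k Z.V2 := LinearMap.range m.g2 with hS2def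
  have hS1le : S1 ≤ S2 := by
    rw [hS1def, Submodule.span_le]
    intro x hx
    rw [Set.mem_singleton_iff] at hx
    rw [hx]
    exact LinearMap.mem_range_self _ _
  have frL : finrank k ↥L = 1 :=
    (LinearMap.finrank_range_of_inj hm1).trans (Module.finrank_self k)
  have frS1 : finrank k ↥S1 = 1 := finrank_span_singleton hm2v
  have frS2 : finrank k ↥S2 = 2 :=
    (LinearMap.finrank_range_of_inj hm2).trans
      (by show finrank k (Fin 2 → k) = 2; rw [finrank_pi]; simp)
  -- the four subrepresentations
  have hc0map : ∀ i, ∀ x ∈ (⊥ : Submodule k Z.V2), Z.f i x ∈ L := by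
    intro i x hx
    rw [Submodule.mem_bot] at hx
    rw [hx, map_zero]
    exact Submodule.zero_mem L
  have hc1map : ∀ i, ∀ x ∈ S1, Z.f i x ∈ L := by
    intro i x hx
    obtain ⟨c, rfl⟩ := Submodule.mem_span_singleton.mp hx
    rw [map_smul, hcommv]
    exact Submodule.smul_mem L c (LinearMap.mem_range_self _ _)
  have hc2map : ∀ i, ∀ x ∈ S2, Z.f i x ∈ L := by
    rintro i x ⟨w, rfl⟩
    rw [hcommv]
    exact LinearMap.mem_range_self _ _
  let c0 : KSub Z := ⟨L, ⊥, hc0map⟩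
  let c1 : KSub Z := ⟨L, S1, hc1map⟩
  let c2 : KSub Z := ⟨L, S2, hc2map⟩
  let c3 : KSub Z := ⟨⊤, ⊤, fun i x _ => Submodule.mem_top⟩
  have hLnt : Nontrivial ↥L := by
    refine nontrivial_of_ne ⟨m.g1 ((1 : k)), LinearMap.mem_range_self _ ((1 : k))⟩ 0 ?_
    intro h
    have h5 : m.g1 ((1 : k)) = 0 := congrArg Subtype.val h
    apply one_ne_zero (α := k)
    apply hm1
    rw [h5, map_zero]
  haveI hbots : Subsingleton ↥(⊥ : Submodule k Z.V2) :=
    ⟨fun a b => Subtype.ext (by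
      rw [(Submodule.mem_bot k).mp a.2, (Submodule.mem_bot k).mp b.2])⟩
  -- lengths
  have r0 : repLen c0.toRep = 1 := by
    show finrank k ↥L + finrank k ↥(⊥ : Submodule k Z.V2) = 1
    rw [frL, finrank_bot]
  have r1 : repLen c1.toRep = 2 := by
    show finrank k ↥L + finrank k ↥S1 = 2
    rw [frL, frS1]
  have r2 : repLen c2.toRep = 3 := by
    show finrank k ↥L + finrank k ↥S2 = 3
    rw [frL, frS2]
  have r3 : repLen c3.toRep = repLen Z := by
    show finrank k ↥(⊤ : Submodule k Z.V1) + finrank k ↥(⊤ : Submodule k Z.V2) = _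
    rw [finrank_top, finrank_top]
    rfl
  -- strict inclusions
  have hlenZ : 4 ≤ finrank k Z.V1 + finrank k Z.V2 := hlen
  have hne3 : ∀ (W1 : Submodule k Z.V1) (W2 : Submodule k Z.V2),
      finrank k ↥W1 + finrank k ↥W2 ≤ 3 → (W1 ≠ ⊤ ∨ W2 ≠ ⊤) := by
    intro W1 W2 hle
    by_contra hcon
    push_neg at hcon
    rw [hcon.1, hcon.2, finrank_top, finrank_top] at hle
    omega
  have hS1ne_bot : (⊥ : Submodule k Z.V2) ≠ S1 := by
    intro h
    have h5 : m.g2 v ∈ (⊥ : Submodule k Z.V2) := h ▸ Submodule.mem_span_singleton_self _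
    exact hm2v (by simpa using h5)
  have hS2ne_bot : (⊥ : Submodule k Z.V2) ≠ S2 := by
    intro h
    have h5 : m.g2 v ∈ (⊥ : Submodule k Z.V2) :=
      h ▸ hS1le (Submodule.mem_span_singleton_self _)
    exact hm2v (by simpa using h5)
  have hS12ne : S1 ≠ S2 := by
    intro h
    have := frS1
    rw [h, frS2] at this
    omega
  have h01 : c0.sLT c1 := ⟨⟨le_refl L, bot_le⟩, Or.inr hS1ne_bot⟩
  have h02 : c0.sLT c2 := ⟨⟨le_refl L, bot_le⟩, Or.inr hS2ne_bot⟩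
  have h12 : c1.sLT c2 := ⟨⟨le_refl L, hS1le⟩, Or.inr hS12ne⟩
  have h03 : c0.sLT c3 :=
    ⟨⟨le_top, le_top⟩, hne3 L ⊥ (by rw [frL, finrank_bot]; omega)⟩
  have h13 : c1.sLT c3 :=
    ⟨⟨le_top, le_top⟩, hne3 L S1 (by rw [frL, frS1]; omega)⟩
  have h23 : c2.sLT c3 :=
    ⟨⟨le_top, le_top⟩, hne3 L S2 (by rw [frL, frS2])⟩
  -- indecomposability of the pieces
  have hzel : Z.f j0 (m.g2 v) ≠ 0 := by
    intro h
    rw [hcommv] at h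
    exact hj0 (hm1 (by rw [map_zero]; exact h))
  haveI hfinL : FiniteDimensional k ↥L := inferInstance
  haveI hbots' : Subsingleton c0.toRep.V2 := hbots
  have hi0 : KIndec c0.toRep := by
    refine ⟨Or.inl hLnt, ?_⟩
    intro U W hic1 hic2
    rcases sub_bot_or_top frL U.W1 with hU1 | hU1
    · exact Or.inl ⟨hU1, sub_subsingleton U.W2⟩
    · exact Or.inr ⟨compl_bot_of_top hic1 hU1, sub_subsingleton W.W2⟩
  haveI hfinS1 : FiniteDimensional k ↥S1 := inferInstance
  have hi1 : KIndec c1.toRep := by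
    refine ⟨Or.inl hLnt, ?_⟩
    intro U W hic1 hic2
    rcases sub_bot_or_top frL U.W1 with hU1 | hU1
    · rcases sub_bot_or_top frS1 U.W2 with hU2 | hU2
      · exact Or.inl ⟨hU1, hU2⟩
      · exfalso
        have h6 := U.hmap j0 ⟨m.g2 v, Submodule.mem_span_singleton_self _⟩
          (Submodule.eq_top_iff'.mp hU2 _)
        rw [hU1] at h6
        have h7 : c1.toRep.f j0 ⟨m.g2 v, Submodule.mem_span_singleton_self _⟩ = 0 := by
          exact (Submodule.mem_bot k).mp h6
        exact hzel (congrArg Subtype.val h7)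
    · have hW1 : W.W1 = ⊥ := compl_bot_of_top hic1 hU1
      rcases sub_bot_or_top frS1 W.W2 with hW2 | hW2
      · exact Or.inr ⟨hW1, hW2⟩
      · exfalso
        have h6 := W.hmap j0 ⟨m.g2 v, Submodule.mem_span_singleton_self _⟩
          (Submodule.eq_top_iff'.mp hW2 _)
        rw [hW1] at h6
        have h7 : c1.toRep.f j0 ⟨m.g2 v, Submodule.mem_span_singleton_self _⟩ = 0 := by
          simpa using h6
        exact hzel (congrArg Subtype.val h7)
  have hKt : ∀ x : ↥S2, (∀ j, c2.toRep.f j x = 0) → x = 0 := by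
    intro x hx
    obtain ⟨u, hu⟩ := x.2
    have hu0 : u = 0 := by
      apply hK
      intro j
      have hj : Z.f j (x : Z.V2) = 0 := congrArg Subtype.val (hx j)
      rw [← hu, hcommv] at hj
      exact hm1 (by rw [map_zero]; exact hj)
    refine Subtype.ext ?_
    show (x : Z.V2) = 0
    rw [← hu, hu0, map_zero]
  have hi2 : KIndec c2.toRep := by
    refine ⟨Or.inl hLnt, ?_⟩
    intro U W hic1 hic2
    rcases sub_bot_or_top frL U.W1 with hU1 | hU1
    · refine Or.inl ⟨hU1, ?_⟩
      rw [Submodule.eq_bot_iff]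
      intro x hx
      refine hKt x fun j => ?_
      have h6 := U.hmap j x hx
      rw [hU1] at h6
      exact (Submodule.mem_bot k).mp h6
    · have hW1 : W.W1 = ⊥ := compl_bot_of_top hic1 hU1
      refine Or.inr ⟨hW1, ?_⟩
      rw [Submodule.eq_bot_iff]
      intro x hx
      refine hKt x fun j => ?_
      have h6 := W.hmap j x hx
      rw [hW1] at h6
      simpa using h6
  have hi3 : KIndec c3.toRep := by
    refine kindec_transfer
      ⟨(⊤ : Submodule k Z.V1).subtype, (⊤ : Submodule k Z.V2).subtype, fun i => ?_⟩
      ⟨fun a b h => Subtype.ext h, fun x => ⟨⟨x, Submodule.mem_top⟩, rfl⟩⟩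
      ⟨fun a b h => Subtype.ext h, fun x => ⟨⟨x, Submodule.mem_top⟩, rfl⟩⟩ hindZ
    refine LinearMap.ext fun x => ?_
    rfl
  -- the chain
  let cc : Fin (3 + 1) → KSub Z := ![c0, c1, c2, c3]
  have hlt : ∀ i j : Fin (3 + 1), i < j → (cc i).sLT (cc j) := by
    intro i j hij
    fin_cases i <;> fin_cases j <;>
      first
        | exact absurd hij (by decide)
        | exact h01
        | exact h02
        | exact h03
        | exact h12
        | exact h13
        | exact h23
  have hind : ∀ i, KIndec (cc i).toRep := by
    intro i
    fin_cases i
    · exact hi0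
    · exact hi1
    · exact hi2
    · exact hi3
  set SS : Set ℕ := Set.range (fun i => repLen ((cc i).toRep)) with hSSdef
  have hSmem : SS ∈ grChains Z := ⟨3, cc, hlt, hind, rfl⟩
  have h1S : (1 : ℕ) ∈ SS := ⟨0, r0⟩
  have h2S : (2 : ℕ) ∈ SS := ⟨1, r1⟩
  have h3S : (3 : ℕ) ∈ SS := ⟨2, r2⟩
  have hLS : repLen Z ∈ SS := ⟨3, r3⟩
  have hSvals : ∀ x ∈ SS, x = 1 ∨ x = 2 ∨ x = 3 ∨ x = repLen Z := by
    rintro x ⟨idx, rfl⟩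
    fin_cases idx
    · exact Or.inl r0
    · exact Or.inr (Or.inl r1)
    · exact Or.inr (Or.inr (Or.inl r2))
    · exact Or.inr (Or.inr (Or.inr r3))
  -- positivity of all chain values
  have hpos : ∀ S' ∈ grChains Z, ∀ x ∈ S', 1 ≤ x := by
    rintro S' ⟨t, cgen, hclt, hcind, rfl⟩ x ⟨idx, rfl⟩
    show 1 ≤ repLen ((cgen idx).toRep)
    have hnt := (hcind idx).1
    have h9 : 1 ≤ finrank k ↥((cgen idx).W1) + finrank k ↥((cgen idx).W2) := by
      rcases hnt with h | h
      · haveI : Nontrivial ↥((cgen idx).W1) := h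
        have := Module.finrank_pos (R := k) (M := ↥((cgen idx).W1))
        omega
      · haveI : Nontrivial ↥((cgen idx).W2) := h
        have := Module.finrank_pos (R := k) (M := ↥((cgen idx).W2))
        omega
    exact h9
  -- endgame
  intro μ hμ
  obtain ⟨hμmem, hμmax⟩ := hμ
  have hposμ : ∀ x ∈ μ, 1 ≤ x := hpos μ hμmem
  have hposS : ∀ x ∈ SS, 1 ≤ x := hpos SS hSmem
  have key : ∀ t, t ∈ SS → (∀ u, 1 ≤ u → u < t → u ∈ SS) → t ∈ μ := by
    intro t htS hsm
    by_contra htμ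
    rcases hμmax SS hSmem with heq | hlt'
    · rw [heq] at htS; exact htμ htS
    · obtain ⟨hne, hd⟩ := hlt'
      have hnonempty : (symmDiff SS μ).Nonempty :=
        ⟨t, Set.mem_symmDiff.mpr (Or.inl ⟨htS, htμ⟩)⟩
      have hdm : sInf (symmDiff SS μ) ∈ symmDiff SS μ := Nat.sInf_mem hnonempty
      rcases Set.mem_symmDiff.mp hdm with ⟨hdS, hdnμ⟩ | ⟨hdμ, hdnS⟩
      · exact hdnμ hd
      · have hle : sInf (symmDiff SS μ) ≤ t :=
          Nat.sInf_le (Set.mem_symmDiff.mpr (Or.inl ⟨htS, htμ⟩))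
        have hge : 1 ≤ sInf (symmDiff SS μ) := hposμ _ hdμ
        have hlt2 : sInf (symmDiff SS μ) < t := by
          rcases lt_or_eq_of_le hle with h | h
          · exact h
          · exact absurd (h ▸ hdμ) htμ
        exact hdnS (hsm _ hge hlt2)
  have h1μ : (1 : ℕ) ∈ μ := key 1 h1S (by intro u h1 h2; omega)
  have h2μ : (2 : ℕ) ∈ μ := key 2 h2S (by
    intro u h1 h2
    have : u = 1 := by omega
    rw [this]; exact h1S)
  have h3μ : (3 : ℕ) ∈ μ := key 3 h3S (by
    intro u h1 h2
    have : u = 1 ∨ u = 2 := by omega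
    rcases this with h | h
    · rw [h]; exact h1S
    · rw [h]; exact h2S)
  have h123sub : ({1, 2, 3} : Set ℕ) ⊆ μ := by
    intro x hx
    simp only [Set.mem_insert_iff, Set.mem_singleton_iff] at hx
    rcases hx with h | h | h
    · rw [h]; exact h1μ
    · rw [h]; exact h2μ
    · rw [h]; exact h3μ
  have hLnμ3 : repLen Z ∉ ({1, 2, 3} : Set ℕ) := by
    simp only [Set.mem_insert_iff, Set.mem_singleton_iff]
    omega
  have hbig : ∃ b ∈ μ, b ∉ ({1, 2, 3} : Set ℕ) := by
    by_contra hcon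
    push_neg at hcon
    rcases hμmax SS hSmem with heq | hlt'
    · have : repLen Z ∈ μ := heq ▸ hLS
      exact hLnμ3 (hcon _ this)
    · obtain ⟨hne, hd⟩ := hlt'
      have hLnμ : repLen Z ∉ μ := fun h => hLnμ3 (hcon _ h)
      have hnonempty : (symmDiff SS μ).Nonempty :=
        ⟨repLen Z, Set.mem_symmDiff.mpr (Or.inl ⟨hLS, hLnμ⟩)⟩
      have hdm : sInf (symmDiff SS μ) ∈ symmDiff SS μ := Nat.sInf_mem hnonempty
      rcases Set.mem_symmDiff.mp hdm with ⟨hdS, hdnμ⟩ | ⟨hdμ, hdnS⟩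
      · exact hdnμ hd
      · have h7 := hcon _ hdμ
        simp only [Set.mem_insert_iff, Set.mem_singleton_iff] at h7
        rcases h7 with h | h | h
        · exact hdnS (h ▸ h1S)
        · exact hdnS (h ▸ h2S)
        · exact hdnS (h ▸ h3S)
  obtain ⟨b, hbμ, hb3⟩ := hbig
  have hb4 : 4 ≤ b := by
    have h8 := hposμ b hbμ
    simp only [Set.mem_insert_iff, Set.mem_singleton_iff] at hb3
    push_neg at hb3
    omega
  constructor
  · refine Or.inr ⟨(Set.ssubset_iff_of_subset h123sub).mpr ⟨b, hbμ, hb3⟩, ?_⟩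
    intro a ha bb hbb
    simp only [Set.mem_insert_iff, Set.mem_singleton_iff] at ha
    obtain ⟨hbbμ, hbb3⟩ := hbb
    simp only [Set.mem_insert_iff, Set.mem_singleton_iff] at hbb3
    push_neg at hbb3
    have := hposμ bb hbbμ
    rcases ha with h | h | h <;> omega
  · constructor
    · intro h
      rw [h] at hb3
      exact hb3 hbμ
    · have hnonempty : (symmDiff ({1, 2, 3} : Set ℕ) μ).Nonempty :=
        ⟨b, Set.mem_symmDiff.mpr (Or.inr ⟨hbμ, hb3⟩)⟩
      have hdm := Nat.sInf_mem hnonempty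
      rcases Set.mem_symmDiff.mp hdm with ⟨hdS, hdnμ⟩ | ⟨hdμ, _⟩
      · exact absurd (h123sub hdS) hdnμ
      · exact hdμ

/-- For the `n`-Kronecker quiver with `n ≥ 3`: if `X` is indecomposable with
dimension vector `(1,1)` and `T i = τ^i X`, then for every `i ≥ 1` the GR measure
of `τ^i X` starts with `{1,2,3}`; in particular `μ(τ^i X) > {1,2,3}`. -/

theorem translate_starts_with {k : Type} [Field k] [IsAlgClosed k] {n : ℕ} (hn : 3 ≤ n)
    (T : ℕ → KRep k n) (hfd : ∀ i, FinDimRep (T i)) (hX : KIndec (T 0))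
    (hdim : dimVec (T 0) = (1, 1))
    (htau : ∀ i, IsARTranslate (T i) (T (i + 1))) :
    ∀ i : ℕ, 1 ≤ i → ∀ μ : Set ℕ, IsGR (T i) μ →
      startsWith ({1, 2, 3} : Set ℕ) μ ∧ grLT ({1, 2, 3} : Set ℕ) μ := by
  have hGood : ∀ i : ℕ, 1 ≤ i →
      ∃ (gA gB : Fin n → ((Fin 2 → k) →ₗ[k] k)) (mA : KHom (mkR gA) (T i))
        (mB : KHom (mkR gB) (T i)),
        Kcond gA ∧ Kcond gB ∧ IsoContra gA gB ∧
        (Function.Injective mA.g1 ∧ Function.Injective mA.g2) ∧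
        (Function.Injective mB.g1 ∧ Function.Injective mB.g2) := by
    intro i hi
    induction i, hi using Nat.le_induction with
    | base =>
      obtain ⟨gA, gB, φA, φB, hKA, hKB, hIC, hNA, hNB⟩ :=
        base_good hn (hfd 0) hX hdim
      obtain ⟨mA, hmA⟩ := step_mono (htau 0) gA φA hNA
      obtain ⟨mB, hmB⟩ := step_mono (htau 0) gB φB hNB
      obtain ⟨hA1, hA2⟩ := mono_of_nonzero hKA (kzero (htau 0)) mA hmA
      obtain ⟨hB1, hB2⟩ := mono_of_nonzero hKB (kzero (htau 0)) mB hmB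
      exact ⟨gA, gB, mA, mB, hKA, hKB, hIC, ⟨hA1, hA2⟩, ⟨hB1, hB2⟩⟩
    | succ i hi ih =>
      obtain ⟨gA, _, mA, _, hKA, _, _, ⟨hA1, hA2⟩, _⟩ := ih
      obtain ⟨gA', gB', hKA', hKB', hIC'⟩ := pair_step (k := k) hn
      obtain ⟨ψA, hψA⟩ := exists_nonsplit_R hn gA gA'
      obtain ⟨φA, hφA⟩ := cocycle_transfer mA hA2 gA' hψA
      obtain ⟨ψB, hψB⟩ := exists_nonsplit_R hn gA gB'
      obtain ⟨φB, hφB⟩ := cocycle_transfer mA hA2 gB' hψB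
      obtain ⟨mA', hmA'⟩ := step_mono (htau i) gA' φA hφA
      obtain ⟨mB', hmB'⟩ := step_mono (htau i) gB' φB hφB
      obtain ⟨hA1', hA2'⟩ := mono_of_nonzero hKA' (kzero (htau i)) mA' hmA'
      obtain ⟨hB1', hB2'⟩ := mono_of_nonzero hKB' (kzero (htau i)) mB' hmB'
      exact ⟨gA', gB', mA', mB', hKA', hKB', hIC', ⟨hA1', hA2'⟩, ⟨hB1', hB2'⟩⟩
  intro i hi μ hμ
  obtain ⟨gA, gB, mA, mB, hKA, hKB, hIC, ⟨hA1, hA2⟩, ⟨hB1, hB2⟩⟩ := hGood i hi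
  haveI := (hfd i).1
  haveI := (hfd i).2
  have hlen : 4 ≤ repLen (T i) := replen4 hIC mA hA1 hA2 mB hB1 hB2
  obtain ⟨j, rfl⟩ : ∃ j, i = j + 1 := ⟨i - 1, by omega⟩
  have hindZ : KIndec (T (j + 1)) := by
    obtain ⟨E, ι, π, hι, hπ, hr1, hr2, hiZ, hiX, hns, hlift⟩ := htau j
    exact hiZ
  exact main_chain (hfd (j + 1)) hindZ hKA mA hA1 hA2 hlen μ hμ
end

section
/- For the n-Kronecker quiver with n ≥ 3: if M is an indecomposable module with GR measure μ^m = {1,2,4,...,2m,2m+1}, then every indecomposable regular factor module of M contains an indecomposable submodule of dimension vector (1,1). -/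
variable {k : Type} [Field k] {n : ℕ}

/-! ### Auxiliary lemmas for the main theorem -/

section Aux

open Module

/-- A representation with subsingleton `V1` is injective. -/
lemma isInjRep_of_subsingleton_V1 (Y : KRep k n) (hs : Subsingleton Y.V1) : IsInjRep Y := by
  intro A B g h hg
  obtain ⟨r, hr⟩ := g.g2.exists_leftInverse_of_injective (LinearMap.ker_eq_bot.mpr hg.2)
  refine ⟨⟨0, h.g2.comp r, fun i => ?_⟩, ?_⟩
  · apply LinearMap.ext
    intro x
    exact Subsingleton.elim _ _
  · have e1 : ((⟨0, h.g2.comp r, fun i => by apply LinearMap.ext; intro x; exact Subsingleton.elim _ _⟩ :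
        KHom B Y).comp g).g2 = h.g2 := by
      show (h.g2.comp r).comp g.g2 = h.g2
      rw [LinearMap.comp_assoc, hr, LinearMap.comp_id]
    apply KHom.ext
    · apply LinearMap.ext; intro x; exact Subsingleton.elim _ _
    · exact e1

/-- A regular representation cannot have subsingleton `V1`. -/
lemma regular_not_subsingleton_V1 (Y : KRep k n) (hY : RegularRep Y)
    (hs : Subsingleton Y.V1) : False :=
  hY.2.2 ⟨0, fun _ => Y, rfl, fun i => i.elim0, isInjRep_of_subsingleton_V1 Y hs⟩

lemma submodule_eq_bot_or_top_of_finrank_one {V : Type} [AddCommGroup V] [Module k V]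
    [FiniteDimensional k V] (h : Module.finrank k V = 1) (p : Submodule k V) :
    p = ⊥ ∨ p = ⊤ := by
  have hle : Module.finrank k p ≤ 1 := h ▸ p.finrank_le
  rcases Nat.le_one_iff_eq_zero_or_eq_one.mp hle with h0 | h1
  · exact Or.inl (Submodule.finrank_eq_zero.mp h0)
  · exact Or.inr (Submodule.eq_top_of_finrank_eq (by rw [h1, h]))

/-- Key dichotomy: a vector of `Y.V2` whose images under all arrows lie on a single
line either produces an indecomposable `(1,1)` subrepresentation, or is killed. -/
lemma exists_one_one_or_zero (Y : KRep k n) (hY : RegularRep Y) (y' : Y.V2) (z' : Y.V1)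
    (h : ∀ i, ∃ a : k, Y.f i y' = a • z') :
    (∃ U : KSub Y, KIndec U.toRep ∧ dimVec U.toRep = (1, 1)) ∨ y' = 0 := by
  by_cases h0 : y' = 0
  · exact Or.inr h0
  by_cases hz : ∀ i, Y.f i y' = 0
  · exfalso
    obtain ⟨C, hC⟩ := Submodule.exists_isCompl (Submodule.span k {y'})
    have hstabU : ∀ i, ∀ x ∈ Submodule.span k {y'}, Y.f i x ∈ (⊥ : Submodule k Y.V1) := by
      intro i x hx
      rw [Submodule.mem_span_singleton] at hx
      obtain ⟨a, rfl⟩ := hx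
      rw [map_smul, hz i, smul_zero]
      exact Submodule.zero_mem _
    have hstabW : ∀ i, ∀ x ∈ C, Y.f i x ∈ (⊤ : Submodule k Y.V1) := fun _ _ _ => trivial
    rcases hY.1.2 ⟨⊥, Submodule.span k {y'}, hstabU⟩ ⟨⊤, C, hstabW⟩ isCompl_bot_top hC
      with h1 | h2
    · exact h0 (Submodule.span_singleton_eq_bot.mp h1.2)
    · refine regular_not_subsingleton_V1 Y hY ?_
      have ht : (⊤ : Submodule k Y.V1) = ⊥ := h2.1
      constructor
      intro a b
      have ha : a ∈ (⊥ : Submodule k Y.V1) := ht ▸ Submodule.mem_top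
      have hb : b ∈ (⊥ : Submodule k Y.V1) := ht ▸ Submodule.mem_top
      rw [Submodule.mem_bot] at ha hb
      rw [ha, hb]
  · push_neg at hz
    obtain ⟨i0, hi0⟩ := hz
    have hspan : ∀ i, Y.f i y' ∈ Submodule.span k {Y.f i0 y'} := by
      intro i
      obtain ⟨a, ha⟩ := h i
      obtain ⟨a0, ha0⟩ := h i0
      have ha0ne : a0 ≠ 0 := by
        rintro rfl
        rw [zero_smul] at ha0
        exact hi0 ha0
      rw [ha, Submodule.mem_span_singleton]
      refine ⟨a * a0⁻¹, ?_⟩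
      rw [ha0, smul_smul, mul_assoc, inv_mul_cancel₀ ha0ne, mul_one]
    have hstab : ∀ i, ∀ x ∈ Submodule.span k {y'}, Y.f i x ∈ Submodule.span k {Y.f i0 y'} := by
      intro i x hx
      rw [Submodule.mem_span_singleton] at hx
      obtain ⟨a, rfl⟩ := hx
      rw [map_smul]
      exact Submodule.smul_mem _ _ (hspan i)
    haveI hfd1 : FiniteDimensional k (Submodule.span k {Y.f i0 y'}) :=
      FiniteDimensional.span_of_finite k (Set.finite_singleton _)
    haveI hfd2 : FiniteDimensional k (Submodule.span k {y'}) :=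
      FiniteDimensional.span_of_finite k (Set.finite_singleton _)
    have e1 : Module.finrank k (Submodule.span k {Y.f i0 y'}) = 1 := finrank_span_singleton hi0
    have e2 : Module.finrank k (Submodule.span k {y'}) = 1 := finrank_span_singleton h0
    set U : KSub Y := ⟨Submodule.span k {Y.f i0 y'}, Submodule.span k {y'}, hstab⟩ with hU
    refine Or.inl ⟨U, ⟨?_, ?_⟩, ?_⟩
    · left
      refine ⟨⟨Y.f i0 y', Submodule.mem_span_singleton_self _⟩, 0, ?_⟩
      intro hcon
      exact hi0 (congrArg Subtype.val hcon)
    · intro U' W' hc1 hc2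
      rcases submodule_eq_bot_or_top_of_finrank_one e1 U'.W1 with u1 | u1 <;>
        rcases submodule_eq_bot_or_top_of_finrank_one e2 U'.W2 with u2 | u2
      · exact Or.inl ⟨u1, u2⟩
      · -- U' = (⊥, ⊤) : stability of U' violated
        exfalso
        have hmem : (⟨y', Submodule.mem_span_singleton_self y'⟩ : U.toRep.V2) ∈ U'.W2 := by
          rw [u2]; trivial
        have hmem2 := U'.hmap i0 _ hmem
        rw [u1] at hmem2
        have hz0 : (⟨Y.f i0 y', Submodule.mem_span_singleton_self _⟩ :
            Submodule.span k {Y.f i0 y'}) = 0 := (Submodule.mem_bot k).mp hmem2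
        exact hi0 (Subtype.ext_iff.mp hz0)
      · -- U' = (⊤, ⊥), so W' = (⊥, ⊤) : stability of W' violated
        exfalso
        have hW1 : W'.W1 = ⊥ := by
          have hd := hc1.disjoint
          rw [disjoint_iff, u1] at hd
          exact (top_inf_eq _).symm.trans hd
        have hW2 : W'.W2 = ⊤ := by
          have hd := hc2.codisjoint
          rw [codisjoint_iff, u2] at hd
          exact (bot_sup_eq _).symm.trans hd
        have hmem : (⟨y', Submodule.mem_span_singleton_self y'⟩ : U.toRep.V2) ∈ W'.W2 := by
          rw [hW2]; trivial
        have hmem2 := W'.hmap i0 _ hmem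
        rw [hW1, Submodule.mem_bot] at hmem2
        have hz0 : (⟨Y.f i0 y', Submodule.mem_span_singleton_self _⟩ :
            Submodule.span k {Y.f i0 y'}) = 0 := hmem2
        exact hi0 (Subtype.ext_iff.mp hz0)
      · -- U' = (⊤, ⊤), so W' = (⊥, ⊥)
        right
        constructor
        · have hd := hc1.disjoint
          rw [disjoint_iff, u1] at hd
          exact (top_inf_eq _).symm.trans hd
        · have hd := hc2.disjoint
          rw [disjoint_iff, u2] at hd
          exact (top_inf_eq _).symm.trans hd
    · show (Module.finrank k (Submodule.span k {Y.f i0 y'}),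
        Module.finrank k (Submodule.span k {y'})) = (1, 1)
      rw [e1, e2]

/-- The inductive climbing step. -/
lemma step_lemma (M Y : KRep k n) (hfd : FinDimRep M) (hY : RegularRep Y) (π : KHom M Y)
    (P Q : KSub M) (h1 : P.W1 ≤ Q.W1) (h2 : P.W2 ≤ Q.W2)
    (hlen : Module.finrank k Q.W1 + Module.finrank k Q.W2 ≤
      Module.finrank k P.W1 + Module.finrank k P.W2 + 2)
    (hlen2 : 2 ≤ Module.finrank k Q.W1 + Module.finrank k Q.W2)
    (hQ : KIndec Q.toRep)
    (hP1 : P.W1 ≤ LinearMap.ker π.g1) (hP2 : P.W2 ≤ LinearMap.ker π.g2) :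
    (∃ U : KSub Y, KIndec U.toRep ∧ dimVec U.toRep = (1, 1)) ∨
      (Q.W1 ≤ LinearMap.ker π.g1 ∧ Q.W2 ≤ LinearMap.ker π.g2) := by
  haveI := hfd.1
  haveI := hfd.2
  have hcomm : ∀ i (y : M.V2), Y.f i (π.g2 y) = π.g1 (M.f i y) := by
    intro i y
    exact LinearMap.congr_fun (π.comm i) y
  by_cases hW2bot : Q.W2 = ⊥
  · -- then `Q` would be decomposable (two lines in W1), contradiction
    exfalso
    have hfr2 : Module.finrank k Q.W2 = 0 := by
      rw [hW2bot]; exact finrank_bot k M.V2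
    have hfr1 : 2 ≤ Module.finrank k Q.W1 := by omega
    haveI : Nontrivial Q.W1 := by
      apply Module.nontrivial_of_finrank_pos (R := k)
      omega
    obtain ⟨v, hv⟩ := exists_ne (0 : Q.W1)
    obtain ⟨C, hC⟩ := Submodule.exists_isCompl (Submodule.span k {v})
    have hzero2 : ∀ x : Q.toRep.V2, x = 0 := by
      intro x
      have hx : Q.W2.subtype x ∈ (⊥ : Submodule k M.V2) := hW2bot.le x.2
      rw [Submodule.mem_bot] at hx
      exact Subtype.ext hx
    have hbotstab : ∀ (p : Submodule k Q.toRep.V1), ∀ i,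
        ∀ x ∈ (⊥ : Submodule k Q.toRep.V2), Q.toRep.f i x ∈ p := by
      intro p i x hx
      rw [Submodule.mem_bot] at hx
      rw [hx, map_zero]
      exact p.zero_mem
    have hcc : IsCompl (⊥ : Submodule k Q.toRep.V2) ⊥ := by
      constructor
      · exact disjoint_bot_left
      · rw [codisjoint_iff, sup_idem]
        ext x
        simp [hzero2 x]
    rcases hQ.2 ⟨Submodule.span k {v}, ⊥, hbotstab _⟩ ⟨C, ⊥, hbotstab _⟩ hC hcc with hcase | hcase
    · have hsb : Submodule.span k {v} = ⊥ := hcase.1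
      exact hv (Submodule.span_singleton_eq_bot.mp hsb)
    · have hCbot : C = ⊥ := hcase.1
      have htop : Submodule.span k {v} = ⊤ := by
        have hcd := hC.codisjoint
        rw [hCbot, codisjoint_iff, sup_bot_eq] at hcd
        exact hcd
      have efr : Module.finrank k (Submodule.span k {v}) = 1 := finrank_span_singleton hv
      rw [htop, finrank_top] at efr
      omega
  · obtain ⟨x0, hx0mem, hx0ne⟩ := (Submodule.ne_bot_iff _).mp hW2bot
    -- `S' = Q.W1` by indecomposability (otherwise a line splits off)
    have hS'le : (P.W1 ⊔ ⨆ i, Submodule.map (M.f i) Q.W2) ≤ Q.W1 := by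
      apply sup_le h1
      apply iSup_le
      intro i x hx
      obtain ⟨y, hy, rfl⟩ := Submodule.mem_map.mp hx
      exact Q.hmap i y hy
    have hS' : (P.W1 ⊔ ⨆ i, Submodule.map (M.f i) Q.W2) = Q.W1 := by
      by_contra hne
      have hnle : ¬ Q.W1 ≤ (P.W1 ⊔ ⨆ i, Submodule.map (M.f i) Q.W2) :=
        fun hle => hne (le_antisymm hS'le hle)
      have hS''ne : Submodule.comap Q.W1.subtype (P.W1 ⊔ ⨆ i, Submodule.map (M.f i) Q.W2) ≠ ⊤ := by
        intro htop
        exact hnle (Submodule.comap_subtype_eq_top.mp htop)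
      obtain ⟨C, hC⟩ := Submodule.exists_isCompl
        (Submodule.comap Q.W1.subtype (P.W1 ⊔ ⨆ i, Submodule.map (M.f i) Q.W2))
      have hstabU : ∀ i, ∀ x ∈ (⊤ : Submodule k Q.toRep.V2),
          Q.toRep.f i x ∈ Submodule.comap Q.W1.subtype
            (P.W1 ⊔ ⨆ i, Submodule.map (M.f i) Q.W2) := by
        intro i x _
        have hmem : M.f i (Q.W2.subtype x) ∈ Submodule.map (M.f i) Q.W2 :=
          Submodule.mem_map.mpr ⟨Q.W2.subtype x, x.2, rfl⟩
        have hle : Submodule.map (M.f i) Q.W2 ≤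
            P.W1 ⊔ ⨆ j, Submodule.map (M.f j) Q.W2 :=
          le_trans (le_iSup (fun j => Submodule.map (M.f j) Q.W2) i) le_sup_right
        exact hle hmem
      have hstabW : ∀ i, ∀ x ∈ (⊥ : Submodule k Q.toRep.V2), Q.toRep.f i x ∈ C := by
        intro i x hx
        rw [Submodule.mem_bot] at hx
        rw [hx, map_zero]
        exact C.zero_mem
      rcases hQ.2 ⟨_, ⊤, hstabU⟩ ⟨C, ⊥, hstabW⟩ hC isCompl_top_bot with hcase | hcase
      · have hbt : (⊤ : Submodule k Q.toRep.V2) = ⊥ := hcase.2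
        have hx0 : (⟨x0, hx0mem⟩ : Q.toRep.V2) ∈ (⊤ : Submodule k Q.toRep.V2) := trivial
        rw [hbt] at hx0
        exact hx0ne (congrArg Subtype.val ((Submodule.mem_bot k (M := Q.toRep.V2)).mp hx0))
      · apply hS''ne
        have hCb : C = ⊥ := hcase.1
        have hcd := hC.codisjoint
        rw [hCb, codisjoint_iff, sup_bot_eq] at hcd
        exact hcd
    have hfin : Q.W2 ≤ LinearMap.ker π.g2 → Q.W1 ≤ LinearMap.ker π.g1 := by
      intro hk2
      rw [← hS']
      apply sup_le hP1
      apply iSup_le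
      intro i x hx
      obtain ⟨y, hy, rfl⟩ := Submodule.mem_map.mp hx
      rw [LinearMap.mem_ker, ← hcomm i y]
      have hy0 : π.g2 y = 0 := hk2 hy
      rw [hy0, map_zero]
    by_cases hb : Module.finrank k Q.W1 ≤ Module.finrank k P.W1 + 1
    · have hex : ∃ w : M.V1, Q.W1 ≤ P.W1 ⊔ Submodule.span k {w} := by
        by_cases hqp : Q.W1 ≤ P.W1
        · exact ⟨0, le_trans hqp le_sup_left⟩
        · obtain ⟨w, hwQ, hwP⟩ := SetLike.not_le_iff_exists.mp hqp
          refine ⟨w, ?_⟩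
          have hle2 : P.W1 ⊔ Submodule.span k {w} ≤ Q.W1 :=
            sup_le h1 ((Submodule.span_singleton_le_iff_mem _ _).mpr hwQ)
          have hlt : P.W1 < P.W1 ⊔ Submodule.span k {w} := by
            refine lt_of_le_of_ne le_sup_left ?_
            intro heq
            apply hwP
            have hsub : Submodule.span k {w} ≤ P.W1 := heq ▸ le_sup_right
            exact hsub (Submodule.mem_span_singleton_self w)
          have hfr := Submodule.finrank_lt_finrank_of_lt hlt
          have hfr2 := Submodule.finrank_mono hle2
          exact (Submodule.eq_of_le_of_finrank_le hle2 (by omega)).symm.le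
      obtain ⟨w, hw⟩ := hex
      have key : ∀ y ∈ Q.W2,
          (∃ U : KSub Y, KIndec U.toRep ∧ dimVec U.toRep = (1, 1)) ∨ π.g2 y = 0 := by
        intro y hy
        apply exists_one_one_or_zero Y hY (π.g2 y) (π.g1 w)
        intro i
        have hmem : M.f i y ∈ P.W1 ⊔ Submodule.span k {w} := hw (Q.hmap i y hy)
        rw [Submodule.mem_sup] at hmem
        obtain ⟨p', hp', s, hs, hsum⟩ := hmem
        rw [Submodule.mem_span_singleton] at hs
        obtain ⟨a, rfl⟩ := hs
        refine ⟨a, ?_⟩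
        rw [hcomm i y, ← hsum, map_add, map_smul]
        have hp0 : π.g1 p' = 0 := hP1 hp'
        rw [hp0, zero_add]
      by_cases hgoal : ∃ U : KSub Y, KIndec U.toRep ∧ dimVec U.toRep = (1, 1)
      · exact Or.inl hgoal
      · have hk2 : Q.W2 ≤ LinearMap.ker π.g2 := by
          intro y hy
          rw [LinearMap.mem_ker]
          exact (key y hy).resolve_left hgoal
        exact Or.inr ⟨hfin hk2, hk2⟩
    · push_neg at hb
      have hm1 := Submodule.finrank_mono h1
      have hm2 := Submodule.finrank_mono h2
      have hW2eq : P.W2 = Q.W2 := Submodule.eq_of_le_of_finrank_le h2 (by omega)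
      have hk2 : Q.W2 ≤ LinearMap.ker π.g2 := hW2eq ▸ hP2
      exact Or.inr ⟨hfin hk2, hk2⟩

/-- The whole representation as a subrepresentation. -/
def topK (M : KRep k n) : KSub M := ⟨⊤, ⊤, fun _ _ _ => trivial⟩

/-- The zero subrepresentation. -/
def botK (M : KRep k n) : KSub M :=
  ⟨⊥, ⊥, fun i x hx => by
    rw [Submodule.mem_bot] at hx
    rw [hx, map_zero]
    exact Submodule.zero_mem _⟩

lemma isCompl_map_top_subtype {V : Type} [AddCommGroup V] [Module k V]
    {p q : Submodule k (⊤ : Submodule k V)} (hpq : IsCompl p q) :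
    IsCompl (p.map (⊤ : Submodule k V).subtype) (q.map (⊤ : Submodule k V).subtype) := by
  constructor
  · rw [disjoint_iff, ← Submodule.map_inf _ (Submodule.injective_subtype _),
      disjoint_iff.mp hpq.disjoint, Submodule.map_bot]
  · rw [codisjoint_iff, ← Submodule.map_sup, codisjoint_iff.mp hpq.codisjoint,
      Submodule.map_top, Submodule.range_subtype]

lemma map_top_subtype_eq_bot {V : Type} [AddCommGroup V] [Module k V]
    {p : Submodule k (⊤ : Submodule k V)}
    (h : p.map (⊤ : Submodule k V).subtype = ⊥) : p = ⊥ := by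
  apply Submodule.map_injective_of_injective (Submodule.injective_subtype
    (⊤ : Submodule k V))
  rw [h, Submodule.map_bot]

lemma kindec_topK (M : KRep k n) (hM : KIndec M) : KIndec (topK M).toRep := by
  constructor
  · rcases hM.1 with h | h
    · left
      obtain ⟨a, b, hab⟩ := h
      exact ⟨⟨a, trivial⟩, ⟨b, trivial⟩, fun hc => hab (congrArg Subtype.val hc)⟩
    · right
      obtain ⟨a, b, hab⟩ := h
      exact ⟨⟨a, trivial⟩, ⟨b, trivial⟩, fun hc => hab (congrArg Subtype.val hc)⟩
  · intro U W hc1 hc2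
    have hstab : ∀ (S : KSub (topK M).toRep), ∀ i, ∀ x ∈ S.W2.map (⊤ : Submodule k M.V2).subtype,
        M.f i x ∈ S.W1.map (⊤ : Submodule k M.V1).subtype := by
      intro S i x hx
      obtain ⟨u, hu, rfl⟩ := Submodule.mem_map.mp hx
      exact Submodule.mem_map.mpr ⟨(topK M).toRep.f i u, S.hmap i u hu, rfl⟩
    rcases hM.2 ⟨U.W1.map _, U.W2.map _, hstab U⟩ ⟨W.W1.map _, W.W2.map _, hstab W⟩
      (isCompl_map_top_subtype hc1) (isCompl_map_top_subtype hc2) with hcase | hcase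
    · exact Or.inl ⟨map_top_subtype_eq_bot hcase.1, map_top_subtype_eq_bot hcase.2⟩
    · exact Or.inr ⟨map_top_subtype_eq_bot hcase.1, map_top_subtype_eq_bot hcase.2⟩

end Aux

/-- For the `n`-Kronecker quiver with `n ≥ 3`: if `M` is indecomposable with GR
measure `μ^m = {1,2,4,...,2m,2m+1}`, then every indecomposable regular factor
module of `M` contains an indecomposable subrepresentation of dimension vector
`(1,1)`. -/
theorem regular_factor_muUp {k : Type} [Field k] [IsAlgClosed k] {n : ℕ} (hn : 3 ≤ n)
    (m : ℕ) (hm : 1 ≤ m) (M : KRep k n) (hfd : FinDimRep M) (hM : KIndec M)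
    (hGR : IsGR M (muUp m)) :
    ∀ Y : KRep k n, RegularRep Y → (∃ φ : KHom M Y, φ.Epi) →
      ∃ U : KSub Y, KIndec U.toRep ∧ dimVec U.toRep = (1, 1) := by
  intro Y hY hphi
  obtain ⟨π, hπ⟩ := hphi
  haveI := hfd.1
  haveI := hfd.2
  by_cases hgoal : ∃ U : KSub Y, KIndec U.toRep ∧ dimVec U.toRep = (1, 1)
  · exact hgoal
  exfalso
  obtain ⟨hchain_mem, hmax⟩ := hGR
  obtain ⟨t, c, hc, hind, hS⟩ := hchain_mem
  have hLval : ∀ i, repLen (c i).toRep =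
      Module.finrank k (c i).W1 + Module.finrank k (c i).W2 := fun i => rfl
  have hmono : StrictMono (fun i => repLen (c i).toRep) := by
    intro i j hij
    obtain ⟨⟨le1, le2⟩, hne⟩ := hc i j hij
    have m1 := Submodule.finrank_mono le1
    have m2 := Submodule.finrank_mono le2
    have hgoal2 : Module.finrank k (c i).W1 + Module.finrank k (c i).W2 <
        Module.finrank k (c j).W1 + Module.finrank k (c j).W2 := by
      rcases hne with h | h
      · have := Submodule.finrank_lt_finrank_of_lt (lt_of_le_of_ne le1 h)
        omega
      · have := Submodule.finrank_lt_finrank_of_lt (lt_of_le_of_ne le2 h)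
        omega
    simpa [hLval] using hgoal2
  have hmem : ∀ v ∈ muUp m, ∃ i, repLen (c i).toRep = v := by
    intro v hv
    rw [hS] at hv
    exact hv
  have hbound : ∀ v ∈ muUp m, v ≤ 2 * m + 1 := by
    intro v hv
    simp only [muUp, muLow, Set.mem_insert_iff, Set.mem_setOf_eq] at hv
    rcases hv with rfl | rfl | ⟨j, hj1, hj2, rfl⟩ <;> omega
  have hmem2 : ∀ j, 1 ≤ j → j ≤ m → (2 * j : ℕ) ∈ muUp m := by
    intro j hj1 hj2
    simp only [muUp, muLow, Set.mem_insert_iff, Set.mem_setOf_eq]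
    right; right
    exact ⟨j, hj1, hj2, rfl⟩
  have hmemtop : (2 * m + 1 : ℕ) ∈ muUp m := Set.mem_insert _ _
  -- The total length of `M` is at most `2m+1`
  have hrepTop : repLen (topK M).toRep =
      Module.finrank k M.V1 + Module.finrank k M.V2 := by
    show Module.finrank k (⊤ : Submodule k M.V1) +
      Module.finrank k (⊤ : Submodule k M.V2) = _
    rw [finrank_top, finrank_top]
  have hMlen : Module.finrank k M.V1 + Module.finrank k M.V2 ≤ 2 * m + 1 := by
    by_contra hbig
    push_neg at hbig
    have hchain' : ∀ i j : Fin (t + 1 + 1), i < j →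
        ((Fin.snoc c (topK M) : Fin (t + 1 + 1) → KSub M) i).sLT
        ((Fin.snoc c (topK M) : Fin (t + 1 + 1) → KSub M) j) := by
      intro i j hij
      obtain ⟨i', rfl⟩ := Fin.exists_castSucc_eq.mpr (Fin.ne_last_of_lt hij)
      by_cases hjl : j = Fin.last (t + 1)
      · subst hjl
        rw [Fin.snoc_castSucc, Fin.snoc_last]
        refine ⟨⟨le_top, le_top⟩, ?_⟩
        by_contra hcon
        push_neg at hcon
        obtain ⟨e1, e2⟩ := hcon
        have hb1 : repLen (c i').toRep ≤ 2 * m + 1 := by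
          apply hbound
          rw [hS]
          exact ⟨i', rfl⟩
        have hb2 : repLen (c i').toRep =
            Module.finrank k M.V1 + Module.finrank k M.V2 := by
          rw [hLval, e1, e2]
          show Module.finrank k (⊤ : Submodule k M.V1) +
            Module.finrank k (⊤ : Submodule k M.V2) = _
          rw [finrank_top, finrank_top]
        omega
      · obtain ⟨j', rfl⟩ := Fin.exists_castSucc_eq.mpr hjl
        rw [Fin.snoc_castSucc, Fin.snoc_castSucc]
        exact hc i' j' (Fin.castSucc_lt_castSucc_iff.mp hij)
    have hind' : ∀ i : Fin (t + 1 + 1),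
        KIndec ((Fin.snoc c (topK M) : Fin (t + 1 + 1) → KSub M) i).toRep := by
      intro i
      by_cases hil : i = Fin.last (t + 1)
      · subst hil
        rw [Fin.snoc_last]
        exact kindec_topK M hM
      · obtain ⟨i', rfl⟩ := Fin.exists_castSucc_eq.mpr hil
        rw [Fin.snoc_castSucc]
        exact hind i'
    have hmemS' : (Set.range fun i : Fin (t + 1 + 1) =>
        repLen ((Fin.snoc c (topK M) : Fin (t + 1 + 1) → KSub M) i).toRep) ∈ grChains M :=
      ⟨t + 1, Fin.snoc c (topK M), hchain', hind', rfl⟩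
    have hgrle := hmax _ hmemS'
    have hrange : (Set.range fun i : Fin (t + 1 + 1) =>
        repLen ((Fin.snoc c (topK M) : Fin (t + 1 + 1) → KSub M) i).toRep) =
        insert (Module.finrank k M.V1 + Module.finrank k M.V2) (muUp m) := by
      ext v
      simp only [Set.mem_range, Set.mem_insert_iff]
      constructor
      · rintro ⟨i, rfl⟩
        by_cases hil : i = Fin.last (t + 1)
        · subst hil
          left
          simp only [Fin.snoc_last]
          exact hrepTop
        · obtain ⟨i', rfl⟩ := Fin.exists_castSucc_eq.mpr hil
          right
          simp only [Fin.snoc_castSucc]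
          have hin : repLen (c i').toRep ∈ muUp m := by
            rw [hS]
            exact ⟨i', rfl⟩
          exact hin
      · rintro (rfl | hv)
        · refine ⟨Fin.last (t + 1), ?_⟩
          simp only [Fin.snoc_last]
          exact hrepTop
        · rw [hS] at hv
          obtain ⟨i, hi⟩ := hv
          refine ⟨Fin.castSucc i, ?_⟩
          simp only [Fin.snoc_castSucc]
          exact hi
    rw [hrange] at hgrle
    have hXnot : (Module.finrank k M.V1 + Module.finrank k M.V2) ∉ muUp m := by
      intro hcon
      have := hbound _ hcon
      omega
    rcases hgrle with heq | ⟨hne, hinf⟩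
    · apply hXnot
      rw [← heq]
      exact Set.mem_insert _ _
    · have hsd : symmDiff (insert (Module.finrank k M.V1 + Module.finrank k M.V2) (muUp m))
          (muUp m) = {Module.finrank k M.V1 + Module.finrank k M.V2} := by
        rw [symmDiff_def]
        ext v
        show v ∈ (insert (Module.finrank k M.V1 + Module.finrank k M.V2) (muUp m) \ muUp m) ∪
            (muUp m \ insert (Module.finrank k M.V1 + Module.finrank k M.V2) (muUp m)) ↔
          v ∈ ({Module.finrank k M.V1 + Module.finrank k M.V2} : Set ℕ)
        simp only [Set.mem_union, Set.mem_diff, Set.mem_insert_iff, Set.mem_singleton_iff]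
        constructor
        · rintro (⟨rfl | hv, hnv⟩ | ⟨hv, hnv⟩)
          · rfl
          · exact absurd hv hnv
          · exact absurd (Or.inr hv) hnv
        · rintro rfl
          exact Or.inl ⟨Or.inl rfl, hXnot⟩
      rw [hsd, csInf_singleton] at hinf
      exact hXnot hinf
  -- climbing induction: rungs of length 2, 4, ..., 2m are killed by π
  have idxlt : ∀ a b : Fin (t + 1),
      repLen (c a).toRep < repLen (c b).toRep → a < b := by
    intro a b hab
    by_contra hle
    push_neg at hle
    have := hmono.le_iff_le.mpr hle
    omega
  have key : ∀ j, j ≤ m → 1 ≤ j → ∃ i, repLen (c i).toRep = 2 * j ∧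
      (c i).W1 ≤ LinearMap.ker π.g1 ∧ (c i).W2 ≤ LinearMap.ker π.g2 := by
    intro j
    induction j with
    | zero => intro _ h; omega
    | succ j ih =>
      intro hjm _
      obtain ⟨i1, hi1⟩ := hmem (2 * (j + 1)) (hmem2 (j + 1) (by omega) hjm)
      by_cases hj0 : j = 0
      · subst hj0
        have hlenQ : Module.finrank k (c i1).W1 + Module.finrank k (c i1).W2 = 2 := by
          rw [← hLval, hi1]
        have hlenP : Module.finrank k (botK M).W1 + Module.finrank k (botK M).W2 = 0 := by
          show Module.finrank k (⊥ : Submodule k M.V1) +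
            Module.finrank k (⊥ : Submodule k M.V2) = 0
          rw [finrank_bot, finrank_bot]
        have hstep := step_lemma M Y hfd hY π (botK M) (c i1) bot_le bot_le
          (by omega) (by omega) (hind i1) bot_le bot_le
        exact ⟨i1, hi1, hstep.resolve_left hgoal⟩
      · obtain ⟨i0, hL0, hk1, hk2⟩ := ih (by omega) (by omega)
        have hlt : i0 < i1 := by
          apply idxlt
          rw [hL0, hi1]
          omega
        obtain ⟨⟨le1, le2⟩, _⟩ := hc _ _ hlt
        have hlenQ : Module.finrank k (c i1).W1 + Module.finrank k (c i1).W2 = 2 * (j + 1) := by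
          rw [← hLval, hi1]
        have hlenP : Module.finrank k (c i0).W1 + Module.finrank k (c i0).W2 = 2 * j := by
          rw [← hLval, hL0]
        have hstep := step_lemma M Y hfd hY π (c i0) (c i1) le1 le2
          (by omega) (by omega) (hind i1) hk1 hk2
        exact ⟨i1, hi1, hstep.resolve_left hgoal⟩
  obtain ⟨i0, hL0, hk1, hk2⟩ := key m le_rfl hm
  obtain ⟨i1, hi1⟩ := hmem (2 * m + 1) hmemtop
  have hlt : i0 < i1 := by
    apply idxlt
    rw [hL0, hi1]
    omega
  obtain ⟨⟨le1, le2⟩, _⟩ := hc _ _ hlt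
  have hlenQ : Module.finrank k (c i1).W1 + Module.finrank k (c i1).W2 = 2 * m + 1 := by
    rw [← hLval, hi1]
  have hlenP : Module.finrank k (c i0).W1 + Module.finrank k (c i0).W2 = 2 * m := by
    rw [← hLval, hL0]
  have hstep := step_lemma M Y hfd hY π (c i0) (c i1) le1 le2
    (by omega) (by omega) (hind i1) hk1 hk2
  obtain ⟨hk1', hk2'⟩ := hstep.resolve_left hgoal
  -- now the top rung is all of M, so π = 0, contradicting Y nontrivial
  have hle1 := (c i1).W1.finrank_le
  have hle2 := (c i1).W2.finrank_le
  have ht1 : (c i1).W1 = ⊤ := Submodule.eq_top_of_finrank_eq (by omega)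
  have ht2 : (c i1).W2 = ⊤ := Submodule.eq_top_of_finrank_eq (by omega)
  have hz1 : ∀ x : M.V1, π.g1 x = 0 := by
    intro x
    have hx : x ∈ (c i1).W1 := by rw [ht1]; trivial
    exact LinearMap.mem_ker.mp (hk1' hx)
  have hz2 : ∀ x : M.V2, π.g2 x = 0 := by
    intro x
    have hx : x ∈ (c i1).W2 := by rw [ht2]; trivial
    exact LinearMap.mem_ker.mp (hk2' hx)
  rcases hY.1.1 with hnt | hnt
  · obtain ⟨a, b, hab⟩ := hnt
    obtain ⟨xa, rfl⟩ := hπ.1 a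
    obtain ⟨xb, rfl⟩ := hπ.1 b
    exact hab (by rw [hz1, hz1])
  · obtain ⟨a, b, hab⟩ := hnt
    obtain ⟨xa, rfl⟩ := hπ.2 a
    obtain ⟨xb, rfl⟩ := hπ.2 b
    exact hab (by rw [hz2, hz2])
end
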